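/- arXiv:2010.11100 — 10 statements merged into one kernel-verified Lean document; each statement's English description precedes it below -/
import Mathlib

section
/- Let n ≥ 3 and let P be a set of n points in the plane ℝ², no three of which are collinear. If H is a family of 3-element subsets of P such that no two members {x,y,c} and {x,y,d} of H share a pair {x,y} while c and d lie strictly on opposite sides of the line through x and y, then |H| ≤ ∇(n). Moreover, this bound is attained: there exists such a set P of n points and such a family H with |H| = ∇(n). -/
attribute [local instance] Classical.propDecidable

def nabla (n : ℕ) : ℕ :=
  if Odd n then n * (n - 1) * (n + 1) / 24 else n * (n - 2) * (n + 2) / 24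

/-- No two members of `H` share a pair `{x, y}` with their third vertices
strictly on opposite sides of the line through `x` and `y`. -/
def D1FreePlanar (H : Finset (Finset (EuclideanSpace ℝ (Fin 2)))) : Prop :=
  ∀ x y c d : EuclideanSpace ℝ (Fin 2),
    ({x, y, c} : Finset (EuclideanSpace ℝ (Fin 2))) ∈ H →
    ({x, y, d} : Finset (EuclideanSpace ℝ (Fin 2))) ∈ H →
    ¬ (affineSpan ℝ ({x, y} : Set (EuclideanSpace ℝ (Fin 2)))).SOppSide c d

/-- No three points of `P` are collinear. -/
def NoThreeCollinear (P : Finset (EuclideanSpace ℝ (Fin 2))) : Prop :=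
  ∀ x ∈ P, ∀ y ∈ P, ∀ z ∈ P, x ≠ y → x ≠ z → y ≠ z →
    ¬ Collinear ℝ ({x, y, z} : Set (EuclideanSpace ℝ (Fin 2)))

/-!
Orient the side `{a, b}` of a triangle `{a, b, c}` of `H` from `a` to `b` when `a, b, c` is
counterclockwise. Two triangles on the same side with apexes on opposite sides of it would orient
that side both ways, so `H` is D₁-free exactly when these orientations are consistent; completing
them arbitrarily gives a tournament on `P` in which every triangle of `H` is a directed 3-cycle.
A tournament with out-degrees `d v` has `C(n,3) - ∑ C(d v, 2)` directed 3-cycles, and since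
`∑ d v = C(n,2)`, convexity of `d ↦ C(d,2)` bounds this by `∇(n)`, with equality when all `d v`
are `⌊(n-1)/2⌋` or one more. Equality is attained by `n` points on a parabola, with `H` the
directed 3-cycles of the rotational tournament on them: a counterclockwise triangle on the
parabola lists its vertices in cyclic order, so it orients its sides as the tournament does.
-/

open Finset

theorem AffineSubspace.sOppSide_iff_mul_neg {V P : Type*} [AddCommGroup V] [Module ℝ V]
    [AddTorsor V P] {s : AffineSubspace ℝ P} (g : P →ᵃ[ℝ] ℝ) (hg : ∀ p, p ∈ s ↔ g p = 0)
    {c d : P} : s.SOppSide c d ↔ g c * g d < 0 := by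
  constructor
  · rintro ⟨hw, hc, hd⟩
    obtain ⟨p, hp, hcpd⟩ := wOppSide_iff_exists_wbtw.1 hw
    have h0 : (0 : ℝ) ∈ Set.uIcc (g c) (g d) := by
      rw [← segment_eq_uIcc, mem_segment_iff_wbtw, ← (hg p).1 hp]
      exact hcpd.map g
    have hc0 : g c ≠ 0 := fun h => hc ((hg c).2 h)
    have hd0 : g d ≠ 0 := fun h => hd ((hg d).2 h)
    rcases Set.mem_uIcc.1 h0 with ⟨h1, h2⟩ | ⟨h1, h2⟩
    · exact mul_neg_of_neg_of_pos (h1.lt_of_ne hc0) (h2.lt_of_ne' hd0)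
    · exact mul_neg_of_pos_of_neg (h2.lt_of_ne' hc0) (h1.lt_of_ne hd0)
  · intro h
    have hc0 : g c ≠ 0 := by rintro h0; simp [h0] at h
    have hd0 : g d ≠ 0 := by rintro h0; simp [h0] at h
    have hsub : g c - g d ≠ 0 := by
      intro h0
      rw [sub_eq_zero.1 h0] at h
      nlinarith [mul_self_nonneg (g d)]
    -- the zero of the affine function `t ↦ g (lineMap c d t)`
    set t := g c / (g c - g d)
    have ht : t ∈ Set.Icc (0 : ℝ) 1 := by
      rcases mul_neg_iff.1 h with ⟨h1, h2⟩ | ⟨h1, h2⟩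
      · exact ⟨div_nonneg h1.le (by linarith), (div_le_one (by linarith)).2 (by linarith)⟩
      · exact ⟨div_nonneg_of_nonpos h1.le (by linarith),
          (div_le_one_of_neg (by linarith)).2 (by linarith)⟩
    have hmem : AffineMap.lineMap c d t ∈ s := by
      rw [hg, AffineMap.apply_lineMap, AffineMap.lineMap_apply_ring']
      simp only [t]
      field_simp
      ring
    exact ⟨Wbtw.wOppSide₁₃ ⟨t, ht, rfl⟩ hmem, fun h => hc0 ((hg c).1 h),
      fun h => hd0 ((hg d).1 h)⟩

local notation "ℝ²" => EuclideanSpace ℝ (Fin 2)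

namespace PlanarD1

lemma mul_le_choose_two_add_choose_two (k q : ℕ) : k * q ≤ q.choose 2 + (k + 1).choose 2 := by
  qify
  rw [Nat.cast_choose_two, Nat.cast_choose_two]
  push_cast
  -- twice the difference is `(q - k) (q - k - 1)`, a product of consecutive integers
  rcases le_or_gt q k with h | h
  · have : (q : ℚ) ≤ k := by exact_mod_cast h
    nlinarith
  · have : (k : ℚ) + 1 ≤ q := by exact_mod_cast h
    nlinarith

lemma choose_two_add_choose_two_eq_mul {k q : ℕ} (h : q = k ∨ q = k + 1) :
    q.choose 2 + (k + 1).choose 2 = k * q := by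
  qify
  rw [Nat.cast_choose_two, Nat.cast_choose_two]
  rcases h with rfl | rfl <;> push_cast <;> ring

lemma sum_mul_le_sum_choose_two {α : Type*} (s : Finset α) (d : α → ℕ) (k : ℕ) :
    k * ∑ v ∈ s, d v ≤ ∑ v ∈ s, (d v).choose 2 + #s * (k + 1).choose 2 := by
  rw [mul_sum, ← smul_eq_mul, ← sum_const, ← sum_add_distrib]
  exact sum_le_sum fun v _ => mul_le_choose_two_add_choose_two k (d v)

lemma sum_choose_two_add_eq_mul_sum {α : Type*} {s : Finset α} {d : α → ℕ} {k : ℕ}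
    (h : ∀ v ∈ s, d v = k ∨ d v = k + 1) :
    ∑ v ∈ s, (d v).choose 2 + #s * (k + 1).choose 2 = k * ∑ v ∈ s, d v := by
  rw [mul_sum, ← smul_eq_mul, ← sum_const, ← sum_add_distrib]
  exact sum_congr rfl fun v hv => choose_two_add_choose_two_eq_mul (h v hv)

lemma cast_choose_three (n : ℕ) : (n.choose 3 : ℚ) = n * (n - 1) * (n - 2) / 6 := by
  rw [Nat.cast_choose_eq_descPochhammer_div]
  simp [descPochhammer_succ_eval, Nat.factorial]

lemma choose_three_add_mul_choose_two (n : ℕ) :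
    n.choose 3 + n * ((n - 1) / 2 + 1).choose 2 = nabla n + (n - 1) / 2 * n.choose 2 := by
  have of_cast : ∀ k X : ℕ,
      ((n.choose 3 + n * (k + 1).choose 2 : ℕ) : ℚ) * 24 = (k * n.choose 2 : ℕ) * 24 + X →
      n.choose 3 + n * (k + 1).choose 2 = X / 24 + k * n.choose 2 := by
    intro k X h
    have : (n.choose 3 + n * (k + 1).choose 2) * 24 = k * n.choose 2 * 24 + X := by
      exact_mod_cast h
    omega
  obtain ⟨m, rfl | rfl⟩ := Nat.even_or_odd' n
  · rcases m with _ | j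
    · decide
    rw [nabla, if_neg (by simp [parity_simps]), show (2 * (j + 1) - 1) / 2 = j by omega,
      show 2 * (j + 1) - 2 = 2 * j by omega]
    refine of_cast j _ ?_
    push_cast [cast_choose_three, Nat.cast_choose_two]
    ring
  · rw [nabla, if_pos (odd_two_mul_add_one m), show (2 * m + 1 - 1) / 2 = m by omega,
      show 2 * m + 1 - 1 = 2 * m by omega]
    refine of_cast m _ ?_
    push_cast [cast_choose_three, Nat.cast_choose_two]
    ring

section Tournament

variable {α : Type*} (r : α → α → Prop) (P : Finset α)

/-- For an asymmetric `r`, a triple in which every vertex has an in-neighbour is exactly a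
directed 3-cycle. -/
noncomputable def cyclicTriples : Finset (Finset α) :=
  {s ∈ P.powersetCard 3 | ∀ v ∈ s, ∃ w ∈ s, r w v}

variable {r P}

lemma cyclicTriples_mono {r' : α → α → Prop} (h : ∀ a b, r a b → r' a b) :
    cyclicTriples r P ⊆ cyclicTriples r' P :=
  monotone_filter_right _ fun _ _ hs v hv => (hs v hv).imp fun w => And.imp_right (h w v)

lemma mem_cyclicTriples_of_cycle [DecidableEq α] {a b c : α} (hP : {a, b, c} ⊆ P)
    (h3 : #{a, b, c} = 3) (hab : r a b) (hbc : r b c) (hca : r c a) :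
    {a, b, c} ∈ cyclicTriples r P := by
  refine mem_filter.2 ⟨mem_powersetCard.2 ⟨hP, h3⟩, ?_⟩
  simp only [mem_insert, mem_singleton, forall_eq_or_imp, forall_eq, exists_eq_or_imp]
  tauto

variable [DecidableEq α] (hr : ∀ a b, r a b → ¬ r b a)
  (htot : ∀ a ∈ P, ∀ b ∈ P, a ≠ b → r a b ∨ r b a)
include hr htot

lemma powersetCard_sdiff_cyclicTriples : P.powersetCard 3 \ cyclicTriples r P =
    P.biUnion fun v => ((P.bipartiteAbove r v).powersetCard 2).image (insert v) := by
  have hirr : ∀ v, ¬ r v v := fun v h => hr v v h h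
  ext s
  simp only [cyclicTriples, mem_sdiff, mem_filter, mem_powersetCard, mem_biUnion, mem_image]
  constructor
  · rintro ⟨⟨hsP, hs3⟩, hnc⟩
    obtain ⟨v, hv, hsrc⟩ : ∃ v ∈ s, ∀ w ∈ s, ¬ r w v := by
      push Not at hnc
      exact hnc ⟨hsP, hs3⟩
    refine ⟨v, hsP hv, s.erase v, ⟨fun w hw => ?_, by rw [card_erase_of_mem hv, hs3]⟩,
      insert_erase hv⟩
    obtain ⟨hwv, hws⟩ := mem_erase.1 hw
    exact mem_filter.2 ⟨hsP hws, (htot v (hsP hv) w (hsP hws) hwv.symm).resolve_right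
      (hsrc w hws)⟩
  · rintro ⟨v, hv, t, ⟨htA, ht2⟩, rfl⟩
    have hvt : v ∉ t := fun h => hirr v (mem_filter.1 (htA h)).2
    have hsub : insert v t ⊆ P := insert_subset hv fun w hw => (mem_filter.1 (htA hw)).1
    have h3 : #(insert v t) = 3 := by rw [card_insert_of_notMem hvt, ht2]
    refine ⟨⟨hsub, h3⟩, fun ⟨_, hcyc⟩ => ?_⟩
    obtain ⟨w, hw, hwv⟩ := hcyc v (mem_insert_self v t)
    rcases mem_insert.1 hw with rfl | hw
    · exact hirr w hwv
    · exact hr v w (mem_filter.1 (htA hw)).2 hwv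

lemma card_cyclicTriples_add_sum_choose_two :
    #(cyclicTriples r P) + ∑ v ∈ P, (#(P.bipartiteAbove r v)).choose 2 = (#P).choose 3 := by
  have hirr : ∀ v, ¬ r v v := fun v h => hr v v h h
  have hdisj : (P : Set α).PairwiseDisjoint
      fun v => ((P.bipartiteAbove r v).powersetCard 2).image (insert v) := by
    intro v _ w _ hvw
    simp only [Function.onFun, disjoint_left, mem_image, mem_powersetCard]
    rintro _ ⟨t, ⟨htA, -⟩, rfl⟩ ⟨t', ⟨htA', -⟩, he⟩
    have hw : w ∈ t := (mem_insert.1 (he ▸ mem_insert_self w t')).resolve_left hvw.symm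
    have hv : v ∈ t' := (mem_insert.1 (he.symm ▸ mem_insert_self v t)).resolve_left hvw
    exact hr v w (mem_filter.1 (htA hw)).2 (mem_filter.1 (htA' hv)).2
  have hcard : ∀ v, #(((P.bipartiteAbove r v).powersetCard 2).image (insert v)) =
      (#(P.bipartiteAbove r v)).choose 2 := by
    intro v
    rw [card_image_of_injOn, card_powersetCard]
    have hvt : ∀ t ∈ (P.bipartiteAbove r v).powersetCard 2, v ∉ t := fun t ht h =>
      hirr v (mem_filter.1 ((mem_powersetCard.1 ht).1 h)).2
    intro t ht t' ht' he
    rw [← erase_insert (hvt t ht), ← erase_insert (hvt t' ht')]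
    exact congrArg (·.erase v) he
  calc #(cyclicTriples r P) + ∑ v ∈ P, (#(P.bipartiteAbove r v)).choose 2
      = #(cyclicTriples r P) + #(P.biUnion fun v =>
          ((P.bipartiteAbove r v).powersetCard 2).image (insert v)) := by
        rw [card_biUnion hdisj, sum_congr rfl fun v _ => hcard v]
    _ = #(P.powersetCard 3) := by
        rw [← powersetCard_sdiff_cyclicTriples hr htot, add_comm]
        exact card_sdiff_add_card_eq_card (filter_subset _ _)
    _ = (#P).choose 3 := card_powersetCard _ _

lemma sum_card_bipartiteAbove : ∑ v ∈ P, #(P.bipartiteAbove r v) = (#P).choose 2 := by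
  have hsplit : ∀ v ∈ P, #(P.bipartiteAbove r v) + #(P.bipartiteBelow r v) = #P - 1 := by
    intro v hv
    rw [← card_erase_of_mem hv, ← card_union_of_disjoint]
    · congr 1
      ext w
      simp only [bipartiteAbove, bipartiteBelow, mem_union, mem_filter, mem_erase]
      constructor
      · rintro (⟨hw, h⟩ | ⟨hw, h⟩) <;> refine ⟨?_, hw⟩ <;> rintro rfl <;> exact hr _ _ h h
      · rintro ⟨hwv, hw⟩
        exact (htot v hv w hw (Ne.symm hwv)).imp (⟨hw, ·⟩) (⟨hw, ·⟩)
    · exact disjoint_left.2 fun w hw hw' => hr _ _ (mem_filter.1 hw).2 (mem_filter.1 hw').2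
  have h2 : 2 * ∑ v ∈ P, #(P.bipartiteAbove r v) = #P * (#P - 1) := by
    rw [two_mul]
    nth_rewrite 2 [sum_card_bipartiteAbove_eq_sum_card_bipartiteBelow]
    rw [← sum_add_distrib, sum_congr rfl hsplit, sum_const, smul_eq_mul]
  rw [Nat.choose_two_right, ← h2, Nat.mul_div_cancel_left _ two_pos]

lemma card_cyclicTriples_le_nabla_of_total : #(cyclicTriples r P) ≤ nabla #P := by
  have hcount := card_cyclicTriples_add_sum_choose_two hr htot
  have hconvex := sum_mul_le_sum_choose_two P (fun v => #(P.bipartiteAbove r v)) ((#P - 1) / 2)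
  rw [sum_card_bipartiteAbove hr htot] at hconvex
  have := choose_three_add_mul_choose_two #P
  omega

lemma card_cyclicTriples_eq_nabla
    (hdeg : ∀ v ∈ P, #(P.bipartiteAbove r v) = (#P - 1) / 2 ∨
      #(P.bipartiteAbove r v) = (#P - 1) / 2 + 1) :
    #(cyclicTriples r P) = nabla #P := by
  have hcount := card_cyclicTriples_add_sum_choose_two hr htot
  have hconvex := sum_choose_two_add_eq_mul_sum hdeg
  rw [sum_card_bipartiteAbove hr htot] at hconvex
  have := choose_three_add_mul_choose_two #P
  omega

omit htot in
lemma card_cyclicTriples_le_nabla : #(cyclicTriples r P) ≤ nabla #P := by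
  set t : α → α → Prop := fun a b => r a b ∨ ¬ r b a ∧ WellOrderingRel a b
  have ht : ∀ a b, t a b → ¬ t b a := by
    rintro a b (hab | ⟨hba, hab⟩) (hba' | ⟨hab', hba'⟩)
    exacts [hr a b hab hba', hab' hab, hba hba', asymm hab hba']
  have httot : ∀ a ∈ P, ∀ b ∈ P, a ≠ b → t a b ∨ t b a := by
    intro a _ b _ hab
    by_cases h : r a b ∨ r b a
    · exact h.imp Or.inl Or.inl
    push Not at h
    rcases trichotomous_of WellOrderingRel a b with h' | rfl | h'
    · exact Or.inl (Or.inr ⟨h.2, h'⟩)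
    · exact absurd rfl hab
    · exact Or.inr (Or.inr ⟨h.1, h'⟩)
  exact (card_le_card (cyclicTriples_mono fun a b => Or.inl)).trans
    (card_cyclicTriples_le_nabla_of_total ht httot)

end Tournament

lemma ne_of_card_eq_three {α : Type*} [DecidableEq α] {a b c : α} (h : #{a, b, c} = 3) :
    a ≠ b := by
  rintro rfl
  rw [insert_idem] at h
  have := card_le_two (a := a) (b := c)
  omega

noncomputable def orient (a b : ℝ²) : ℝ² →ᵃ[ℝ] ℝ where
  toFun c := (b 0 - a 0) * (c 1 - a 1) - (b 1 - a 1) * (c 0 - a 0)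
  linear := (b 0 - a 0) • EuclideanSpace.projₗ (𝕜 := ℝ) 1 - (b 1 - a 1) • EuclideanSpace.projₗ 0
  map_vadd' c v := by simp; ring

@[simp] lemma orient_apply (a b c : ℝ²) :
    orient a b c = (b 0 - a 0) * (c 1 - a 1) - (b 1 - a 1) * (c 0 - a 0) := rfl

lemma orient_swap (a b c : ℝ²) : orient b a c = -orient a b c := by
  simp only [orient_apply]; ring

lemma orient_rotate (a b c : ℝ²) : orient b c a = orient a b c := by
  simp only [orient_apply]; ring

lemma mem_affineSpan_pair_iff_orient_eq_zero {x y : ℝ²} (hxy : x ≠ y) (p : ℝ²) :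
    p ∈ line[ℝ, x, y] ↔ orient x y p = 0 := by
  rw [← vsub_vadd p x, vadd_left_mem_affineSpan_pair, vsub_vadd, orient_apply]
  have hu : y 0 - x 0 ≠ 0 ∨ y 1 - x 1 ≠ 0 := by
    by_contra! h
    exact hxy (by ext i; fin_cases i <;> simp <;> linarith [h.1, h.2])
  constructor
  · rintro ⟨r, hr⟩
    have h0 := congrArg (· 0) hr
    have h1 := congrArg (· 1) hr
    simp only [PiLp.smul_apply, vsub_eq_sub, PiLp.sub_apply, smul_eq_mul] at h0 h1
    rw [← h0, ← h1]
    ring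
  · intro h
    rcases hu with hu | hu
    · refine ⟨(p 0 - x 0) / (y 0 - x 0), ?_⟩
      ext i; fin_cases i <;> simp <;> field_simp; linarith
    · refine ⟨(p 1 - x 1) / (y 1 - x 1), ?_⟩
      ext i; fin_cases i <;> simp <;> field_simp; linarith

lemma collinear_iff_orient_eq_zero {x y : ℝ²} (hxy : x ≠ y) (z : ℝ²) :
    Collinear ℝ {x, y, z} ↔ orient x y z = 0 := by
  rw [← mem_affineSpan_pair_iff_orient_eq_zero hxy]
  refine ⟨fun h => h.mem_affineSpan_of_mem_of_ne (by simp) (by simp) (by simp) hxy, fun h => ?_⟩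
  rw [Set.pair_comm y z, Set.insert_comm x z]
  exact collinear_insert_of_mem_affineSpan_pair h

lemma sOppSide_affineSpan_pair_iff {x y : ℝ²} (hxy : x ≠ y) (c d : ℝ²) :
    line[ℝ, x, y].SOppSide c d ↔ orient x y c * orient x y d < 0 :=
  AffineSubspace.sOppSide_iff_mul_neg _ (mem_affineSpan_pair_iff_orient_eq_zero hxy)

def PosEdge (H : Finset (Finset ℝ²)) (a b : ℝ²) : Prop :=
  ∃ c, {a, b, c} ∈ H ∧ 0 < orient a b c

lemma d1FreePlanar_iff {H : Finset (Finset ℝ²)} (hH : ∀ e ∈ H, #e = 3) :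
    D1FreePlanar H ↔ ∀ a b, PosEdge H a b → ¬ PosEdge H b a := by
  constructor
  · rintro hD a b ⟨c, hc, hc0⟩ ⟨d, hd, hd0⟩
    rw [insert_comm] at hd
    refine hD a b c d hc hd
      ((sOppSide_affineSpan_pair_iff (ne_of_card_eq_three (hH _ hc)) c d).2 ?_)
    exact mul_neg_of_pos_of_neg hc0 (by linarith [orient_swap a b d])
  · intro h x y c d hc hd hopp
    have hyx : ∀ e, {x, y, e} ∈ H → ({y, x, e} : Finset ℝ²) ∈ H := fun e he => by
      rwa [insert_comm]
    rcases mul_neg_iff.1 ((sOppSide_affineSpan_pair_iff (ne_of_card_eq_three (hH _ hc)) c d).1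
      hopp) with ⟨hc0, hd0⟩ | ⟨hc0, hd0⟩
    · exact h x y ⟨c, hc, hc0⟩ ⟨d, hyx d hd, by linarith [orient_swap x y d]⟩
    · exact h x y ⟨d, hd, hd0⟩ ⟨c, hyx c hc, by linarith [orient_swap x y c]⟩

lemma posEdge_cycle {H : Finset (Finset ℝ²)} {a b c : ℝ²} (he : {a, b, c} ∈ H)
    (h : 0 < orient a b c) : PosEdge H a b ∧ PosEdge H b c ∧ PosEdge H c a := by
  refine ⟨⟨c, he, h⟩, ⟨a, ?_, by rwa [orient_rotate]⟩, ⟨b, ?_, by rwa [← orient_rotate c a b]⟩⟩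
  · rwa [pair_comm c a, insert_comm b a]
  · rwa [insert_comm c a, pair_comm c b]

lemma subset_cyclicTriples_posEdge {P : Finset ℝ²} {H : Finset (Finset ℝ²)}
    (hP : NoThreeCollinear P) (hH : ∀ e ∈ H, #e = 3 ∧ e ⊆ P) :
    H ⊆ cyclicTriples (PosEdge H) P := by
  intro e he
  obtain ⟨hcard, hsub⟩ := hH e he
  obtain ⟨a, b, c, hab, hac, hbc, rfl⟩ := card_eq_three.1 hcard
  have habc : orient a b c ≠ 0 := fun h0 => hP a (hsub (by simp)) b (hsub (by simp))
    c (hsub (by simp)) hab hac hbc ((collinear_iff_orient_eq_zero hab c).2 h0)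
  obtain ⟨x, y, z, hxyz, hpos⟩ : ∃ x y z, ({x, y, z} : Finset ℝ²) = {a, b, c} ∧
      0 < orient x y z := by
    rcases habc.lt_or_gt with hneg | hpos
    · exact ⟨a, c, b, by rw [pair_comm], by rw [orient_rotate b a c, orient_swap]; linarith⟩
    · exact ⟨a, b, c, rfl, hpos⟩
  rw [← hxyz] at he hcard hsub ⊢
  obtain ⟨hxy, hyz, hzx⟩ := posEdge_cycle he hpos
  exact mem_cyclicTriples_of_cycle hsub hcard hxy hyz hzx

theorem card_le_nabla_of_d1FreePlanar {P : Finset ℝ²} {H : Finset (Finset ℝ²)}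
    (hP : NoThreeCollinear P) (hH : ∀ e ∈ H, #e = 3 ∧ e ⊆ P) (hD : D1FreePlanar H) :
    #H ≤ nabla #P :=
  (card_le_card (subset_cyclicTriples_posEdge hP hH)).trans
    (card_cyclicTriples_le_nabla ((d1FreePlanar_iff fun e he => (hH e he).1).1 hD))

noncomputable def parabola (i : ℕ) : ℝ² := !₂[i, i ^ 2]

lemma parabola_injective : Function.Injective parabola := fun i j h => by
  simpa [parabola] using congrArg (· 0) h

lemma orient_parabola (a b c : ℕ) :
    orient (parabola a) (parabola b) (parabola c) = (((b - a) * (c - a) * (c - b) : ℤ) : ℝ) := by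
  simp [parabola]
  ring

/-- `i` beats the `⌊n/2⌋` vertices following it in the cyclic order of `range n`; at distance
exactly `n/2` the smaller vertex wins. -/
def circ (n i j : ℕ) : Prop := (i < j ∧ 2 * (j - i) ≤ n) ∨ (j < i ∧ n < 2 * (i - j))

lemma circ_asymm {n i j : ℕ} : circ n i j → ¬ circ n j i := by unfold circ; omega

lemma circ_total {n i j : ℕ} (h : i ≠ j) : circ n i j ∨ circ n j i := by unfold circ; omega

lemma card_bipartiteAbove_circ {n v : ℕ} (hv : v < n) :
    #((range n).bipartiteAbove (circ n) v) = (n - 1) / 2 ∨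
      #((range n).bipartiteAbove (circ n) v) = (n - 1) / 2 + 1 := by
  have : (range n).bipartiteAbove (circ n) v =
      Ioc v (min (n - 1) (v + n / 2)) ∪ range (v - n / 2) := by
    ext u
    simp only [mem_bipartiteAbove, circ, mem_range, mem_union, mem_Ioc]
    omega
  rw [this, card_union_of_disjoint (disjoint_left.2 fun u h h' => by
    simp only [mem_Ioc, mem_range] at h h'; omega), Nat.card_Ioc, card_range]
  omega

lemma posEdge_circ {n : ℕ} {x y : ℝ²}
    (h : PosEdge ((cyclicTriples (circ n) (range n)).image (image parabola)) x y) :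
    ∃ i j, x = parabola i ∧ y = parabola j ∧ circ n i j := by
  obtain ⟨z, hz, hpos⟩ := h
  obtain ⟨s, hs, hsxyz⟩ := mem_image.1 hz
  have hmem : ∀ p ∈ ({x, y, z} : Finset ℝ²), ∃ i ∈ s, parabola i = p := fun p hp =>
    mem_image.1 (hsxyz ▸ hp)
  obtain ⟨i, hi, rfl⟩ := hmem x (by simp)
  obtain ⟨j, hj, rfl⟩ := hmem y (by simp)
  obtain ⟨k, hk, rfl⟩ := hmem z (by simp)
  refine ⟨i, j, rfl, rfl, ?_⟩
  have hijk : (0 : ℤ) < (j - i) * (k - i) * (k - j) := by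
    exact_mod_cast orient_parabola i j k ▸ hpos
  simp only [mul_pos_iff, mul_neg_iff, sub_pos, sub_neg] at hijk
  obtain ⟨hs3, hcyc⟩ := mem_filter.1 hs
  have hs : s = {i, j, k} := by
    refine (eq_of_subset_of_card_le (by simp [insert_subset_iff, hi, hj, hk]) ?_).symm
    rw [(mem_powersetCard.1 hs3).2, card_eq_three.2 ⟨i, j, k, by omega, by omega, by omega, rfl⟩]
  rw [hs] at hcyc
  simp only [mem_insert, mem_singleton, forall_eq_or_imp, forall_eq, exists_eq_or_imp,
    exists_eq_left] at hcyc
  unfold circ at hcyc ⊢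
  omega

theorem exists_d1FreePlanar_card_eq_nabla (n : ℕ) :
    ∃ (P : Finset ℝ²) (H : Finset (Finset ℝ²)), #P = n ∧ NoThreeCollinear P ∧
      (∀ e ∈ H, #e = 3 ∧ e ⊆ P) ∧ D1FreePlanar H ∧ #H = nabla n := by
  have hH : ∀ e ∈ (cyclicTriples (circ n) (range n)).image (image parabola),
      #e = 3 ∧ e ⊆ (range n).image parabola := by
    intro e he
    obtain ⟨s, hs, rfl⟩ := mem_image.1 he
    obtain ⟨hsub, hs3⟩ := mem_powersetCard.1 (mem_filter.1 hs).1
    exact ⟨by rw [card_image_of_injective _ parabola_injective, hs3], image_subset_image hsub⟩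
  refine ⟨_, _, ?_, ?_, hH, ?_, ?_⟩
  · rw [card_image_of_injective _ parabola_injective, card_range]
  · simp only [NoThreeCollinear, mem_image, forall_exists_index, and_imp]
    rintro _ a - rfl _ b - rfl _ c - rfl hab hac hbc
    rw [collinear_iff_orient_eq_zero hab, orient_parabola]
    have : a ≠ b ∧ a ≠ c ∧ b ≠ c :=
      ⟨by rintro rfl; exact hab rfl, by rintro rfl; exact hac rfl, by rintro rfl; exact hbc rfl⟩
    have : ((b - a) * (c - a) * (c - b) : ℤ) ≠ 0 :=
      mul_ne_zero (mul_ne_zero (by omega) (by omega)) (by omega)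
    exact_mod_cast this
  · rw [d1FreePlanar_iff fun e he => (hH e he).1]
    rintro _ _ hab hba
    obtain ⟨i, j, rfl, rfl, hij⟩ := posEdge_circ hab
    obtain ⟨j', i', hj, hi, hji⟩ := posEdge_circ hba
    obtain rfl := parabola_injective hj
    obtain rfl := parabola_injective hi
    exact circ_asymm hij hji
  · rw [card_image_of_injective _ (image_injective parabola_injective),
      card_cyclicTriples_eq_nabla (fun _ _ => circ_asymm) (fun _ _ _ _ => circ_total)
        fun v hv => by simpa only [card_range] using card_bipartiteAbove_circ (mem_range.1 hv),
      card_range]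

end PlanarD1

theorem planar_D1_general (n : ℕ) :
    (∀ (P : Finset (EuclideanSpace ℝ (Fin 2)))
       (H : Finset (Finset (EuclideanSpace ℝ (Fin 2)))),
      P.card = n → NoThreeCollinear P →
      (∀ e ∈ H, e.card = 3 ∧ e ⊆ P) → D1FreePlanar H →
      H.card ≤ nabla n) ∧
    (∃ (P : Finset (EuclideanSpace ℝ (Fin 2)))
       (H : Finset (Finset (EuclideanSpace ℝ (Fin 2)))),
      P.card = n ∧ NoThreeCollinear P ∧
      (∀ e ∈ H, e.card = 3 ∧ e ⊆ P) ∧ D1FreePlanar H ∧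
      H.card = nabla n) :=
  ⟨fun _ _ hcard hP hH hD => hcard ▸ PlanarD1.card_le_nabla_of_d1FreePlanar hP hH hD,
    PlanarD1.exists_d1FreePlanar_card_eq_nabla n⟩

theorem planar_D1 (n : ℕ) (hn : 3 ≤ n) :
    (∀ (P : Finset (EuclideanSpace ℝ (Fin 2)))
       (H : Finset (Finset (EuclideanSpace ℝ (Fin 2)))),
      P.card = n → NoThreeCollinear P →
      (∀ e ∈ H, e.card = 3 ∧ e ⊆ P) → D1FreePlanar H →
      H.card ≤ nabla n) ∧
    (∃ (P : Finset (EuclideanSpace ℝ (Fin 2)))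
       (H : Finset (Finset (EuclideanSpace ℝ (Fin 2)))),
      P.card = n ∧ NoThreeCollinear P ∧
      (∀ e ∈ H, e.card = 3 ∧ e ⊆ P) ∧ D1FreePlanar H ∧
      H.card = nabla n) :=
  planar_D1_general n
end

section
/- For every integer n ≥ 3, the maximum number of triples in a D_1-free cgh on Ω_n equals ∇(n); that is, ex_circ(n, D_1) = ∇(n). -/
/-- The list of points of `ZMod n` occurs in this clockwise cyclic order:
anchored at the first point, the clockwise arc-distances from it are
positive and strictly increasing. -/
def CWList (n : ℕ) : List (ZMod n) → Prop
  | [] => True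
  | a :: l => ((0 : ℕ) :: l.map fun b => (b - a).val).Chain' (· < ·)

/-- `H` is a 3-uniform (convex geometric) hypergraph on `Ω_n = ZMod n`. -/
def IsCgh (n : ℕ) (H : Finset (Finset (ZMod n))) : Prop :=
  ∀ e ∈ H, e.card = 3

/-- `H` contains a copy of the configuration `D₁`: two triples sharing exactly
the pair `{x, y}`, with the four vertices in clockwise cyclic order `x, c, y, d`. -/
def HasD1 (n : ℕ) (H : Finset (Finset (ZMod n))) : Prop :=
  ∃ x c y d : ZMod n,
    CWList n [x, c, y, d] ∧
    ({x, y, c} : Finset (ZMod n)) ∈ H ∧ ({x, y, d} : Finset (ZMod n)) ∈ H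

/-!
Lower bound: take the triples `a < b < c` of residues in `[0, n)` whose gaps `b - a` and `c - b`
are odd; there are `∇(n)` of them. Two of them sharing the side `{x, y}` from opposite sides would
make `x + y` both even (in one, the third vertex lies between `x` and `y`, so `y - x` is a sum of
two odd gaps) and odd (in the other, `y - x` is itself a gap).

Upper bound: orient `u → v` whenever `H` has a triangle `uvw` with `w` on the clockwise arc from
`u` to `v`. Two triangles on opposite sides of `uv` form a `D₁`, so this relation is asymmetric;
extend it to a tournament. A triangle `xyz` of `H` in clockwise order gives `x → z → y → x`, so
`H` consists of cyclic triangles, and a tournament with out-degrees `d v` has at most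
`C(n, 3) - ∑ C(d v, 2)` of them; as `∑ d v = C(n, 2)`, convexity bounds this by `∇(n)`.
-/

open Finset

theorem two_mul_cast_choose_two (a : ℕ) : (2 * a.choose 2 : ℤ) = a * (a - 1) := by
  rw [← Nat.cast_descFactorial_two, Nat.descFactorial_eq_factorial_mul_choose]
  simp

theorem six_mul_cast_choose_three (a : ℕ) : (6 * a.choose 3 : ℤ) = a * (a - 1) * (a - 2) := by
  rcases a with _ | a
  · simp
  have h := congrArg (Nat.cast : ℕ → ℤ) (Nat.add_one_mul_choose_eq a 2)
  push_cast at h ⊢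
  linear_combination 2 * h.symm + (a + 1 : ℤ) * two_mul_cast_choose_two a

theorem four_mul_mul_le_four_mul_sq_add_sq (m d : ℤ) :
    4 * m * d ≤ 4 * d ^ 2 + m ^ 2 - if Odd m then 1 else 0 := by
  split_ifs with hm
  · have : 2 * d - m ≠ 0 := by rintro h; obtain ⟨k, rfl⟩ := hm; omega
    nlinarith [Int.one_le_abs this, sq_abs (2 * d - m)]
  · nlinarith [sq_nonneg (2 * d - m)]

theorem sum_range_add_one_eq_choose_two (k : ℕ) :
    ∑ s ∈ range k, (s + 1) = (k + 1).choose 2 := by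
  induction k with
  | zero => simp
  | succ k ih =>
    rw [sum_range_succ, ih, Nat.choose_succ_succ' (k + 1), Nat.choose_one_right, add_comm]

theorem twenty_four_mul_sum_choose_two (n : ℕ) :
    (24 * ∑ m ∈ range n, (m / 2 + 1).choose 2 : ℤ) =
      (n : ℤ) ^ 3 - n - if Even n then 3 * (n : ℤ) else 0 := by
  induction n with
  | zero => simp
  | succ n ih =>
    have h2 := two_mul_cast_choose_two (n / 2 + 1)
    rw [sum_range_succ, Nat.cast_add, mul_add, ih]
    rcases Nat.even_or_odd' n with ⟨k, rfl | rfl⟩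
    · rw [show 2 * k / 2 = k by omega] at h2 ⊢
      rw [if_pos (even_two_mul k), if_neg (Nat.not_even_iff_odd.mpr (odd_two_mul_add_one k))]
      push_cast at h2 ⊢
      linear_combination 12 * h2
    · rw [show (2 * k + 1) / 2 = k by omega] at h2 ⊢
      have hodd := Nat.not_even_iff_odd.mpr (odd_two_mul_add_one k)
      rw [if_neg hodd, if_pos (Nat.even_add_one.mpr hodd)]
      push_cast at h2 ⊢
      linear_combination 12 * h2

theorem nabla_eq_sum_choose_two (n : ℕ) : nabla n = ∑ m ∈ range n, (m / 2 + 1).choose 2 := by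
  have h := twenty_four_mul_sum_choose_two n
  unfold nabla
  split_ifs with hn <;> refine Nat.div_eq_of_eq_mul_left (by norm_num) ?_
  · rw [if_neg (Nat.not_even_iff_odd.mpr hn)] at h
    obtain ⟨k, rfl⟩ := hn
    rw [show 2 * k + 1 - 1 = 2 * k by omega]
    zify
    push_cast at h ⊢
    linear_combination -h
  · obtain ⟨k, rfl⟩ := Nat.not_odd_iff_even.mp hn
    rw [if_pos (by simp)] at h
    rcases k with _ | k
    · simp
    rw [show k + 1 + (k + 1) - 2 = k + k by omega]
    zify
    push_cast at h ⊢
    linear_combination -h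

section Tournament

variable {α : Type*}

theorem exists_tournament_extending (r : α → α → Prop) (hr : ∀ u v, r u v → ¬ r v u) :
    ∃ t : α → α → Prop, (∀ u v, r u v → t u v) ∧ (∀ u v, t u v → ¬ t v u) ∧
      ∀ u v, u ≠ v → t u v ∨ t v u := by
  refine ⟨fun u v => r u v ∨ (¬ r v u ∧ WellOrderingRel u v), fun u v => Or.inl, ?_, ?_⟩
  · rintro u v (huv | ⟨hvu', huv⟩) (hvu | ⟨huv', hvu⟩)
    exacts [hr u v huv hvu, huv' huv, hvu' hvu, asymm huv hvu]
  · intro u v hne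
    by_cases huv : r u v
    · exact Or.inl (Or.inl huv)
    by_cases hvu : r v u
    · exact Or.inr (Or.inl hvu)
    rcases trichotomous_of WellOrderingRel u v with h | h | h
    exacts [Or.inl (Or.inr ⟨hvu, h⟩), absurd h hne, Or.inr (Or.inr ⟨huv, h⟩)]

variable [Fintype α] [DecidableEq α] (t : α → α → Prop) [DecidableRel t]

def outNbrs (v : α) : Finset α := univ.filter (t v)

variable {t}

theorem card_add_sum_choose_two_card_outNbrs_le (hasym : ∀ u v, t u v → ¬ t v u)
    {H : Finset (Finset α)} (hH : ∀ e ∈ H, #e = 3)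
    (hcyc : ∀ e ∈ H, ∀ v ∈ e, ∃ u ∈ e, t u v) :
    #H + ∑ v, (#(outNbrs t v)).choose 2 ≤ (Fintype.card α).choose 3 := by
  set A := univ.sigma fun v => (outNbrs t v).powersetCard 2
  have hA : ∀ s ∈ A, (∀ u ∈ s.2, t s.1 u) ∧ #s.2 = 2 := by
    intro s hs
    simp only [A, mem_sigma, mem_powersetCard, subset_iff, outNbrs, mem_filter] at hs
    exact ⟨fun u hu => (hs.2.1 hu).2, hs.2.2⟩
  have hirr : ∀ v, ¬ t v v := fun v h => hasym v v h h
  have hapex : ∀ s ∈ A, s.1 ∉ s.2 := fun s hs h => hirr _ ((hA s hs).1 _ h)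
  -- the apex of `insert v p` is its only vertex beating the other two
  have hinj : Set.InjOn (fun s : (_ : α) × Finset α => insert s.1 s.2) A := by
    rintro ⟨v, p⟩ hp ⟨w, q⟩ hq (hpq : insert v p = insert w q)
    obtain rfl : v = w := by
      by_contra hvw
      have hw : w ∈ p := (mem_insert.mp (hpq ▸ mem_insert_self w q)).resolve_left (Ne.symm hvw)
      have hv : v ∈ q := (mem_insert.mp (hpq ▸ mem_insert_self v p)).resolve_left hvw
      exact hasym v w ((hA _ hp).1 w hw) ((hA _ hq).1 v hv)
    have hvp : v ∉ p := hapex _ hp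
    have hvq : v ∉ q := hapex _ hq
    rw [← erase_insert hvp, ← erase_insert hvq, hpq]
  have hdisj : Disjoint H (A.image fun s => insert s.1 s.2) := by
    refine disjoint_right.mpr ?_
    rintro _ hs he
    obtain ⟨⟨v, p⟩, hp, rfl⟩ := mem_image.mp hs
    obtain ⟨u, hu, huv⟩ := hcyc _ he v (mem_insert_self v p)
    rcases mem_insert.mp hu with rfl | hu
    exacts [hirr u huv, hasym v u ((hA _ hp).1 u hu) huv]
  have hsub : H ∪ A.image (fun s => insert s.1 s.2) ⊆ univ.powersetCard 3 := by
    intro e he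
    refine mem_powersetCard.mpr ⟨subset_univ e, ?_⟩
    rcases mem_union.mp he with he | he
    · exact hH e he
    · obtain ⟨s, hs, rfl⟩ := mem_image.mp he
      rw [card_insert_of_notMem (hapex s hs), (hA s hs).2]
  calc #H + ∑ v, (#(outNbrs t v)).choose 2
      = #(H ∪ A.image fun s => insert s.1 s.2) := by
        rw [card_union_of_disjoint hdisj, card_image_of_injOn hinj, card_sigma]
        simp only [card_powersetCard]
    _ ≤ (Fintype.card α).choose 3 := by
        simpa using card_le_card hsub

theorem two_mul_sum_card_outNbrs (hasym : ∀ u v, t u v → ¬ t v u)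
    (htot : ∀ u v, u ≠ v → t u v ∨ t v u) :
    2 * ∑ v, #(outNbrs t v) + Fintype.card α = Fintype.card α * Fintype.card α := by
  have hsum : ∑ v, #(outNbrs t v) = #(univ.filter fun p : α × α => t p.1 p.2) := by
    simp only [outNbrs, card_filter, Fintype.sum_prod_type]
  have hswap : #(univ.filter fun p : α × α => t p.2 p.1) =
      #(univ.filter fun p : α × α => t p.1 p.2) :=
    card_equiv (Equiv.prodComm α α) (by simp)
  have hsplit : (univ : Finset α).offDiag = (univ.filter fun p : α × α => t p.1 p.2) ∪
      (univ.filter fun p : α × α => t p.2 p.1) := by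
    ext ⟨u, v⟩
    simp only [mem_offDiag, mem_univ, true_and, mem_union, mem_filter]
    exact ⟨htot u v, by rintro (h | h) rfl <;> exact hasym u u h h⟩
  have hdisj : Disjoint (univ.filter fun p : α × α => t p.1 p.2)
      (univ.filter fun p : α × α => t p.2 p.1) :=
    disjoint_filter.mpr fun p _ h h' => hasym _ _ h h'
  have := congrArg card hsplit
  rw [card_union_of_disjoint hdisj, hswap, offDiag_card, card_univ] at this
  have := Nat.le_mul_self (Fintype.card α)
  omega

theorem card_cyclic_triangles_le (hasym : ∀ u v, t u v → ¬ t v u)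
    (htot : ∀ u v, u ≠ v → t u v ∨ t v u) {H : Finset (Finset α)} (hH : ∀ e ∈ H, #e = 3)
    (hcyc : ∀ e ∈ H, ∀ v ∈ e, ∃ u ∈ e, t u v) :
    (24 * #H : ℤ) ≤ (Fintype.card α : ℤ) ^ 3 - Fintype.card α -
      if Even (Fintype.card α) then 3 * (Fintype.card α : ℤ) else 0 := by
  set N := Fintype.card α
  set d : α → ℕ := fun v => #(outNbrs t v)
  set ε : ℤ := if Even N then 1 else 0
  have hcount : (#H : ℤ) + ∑ v, ((d v).choose 2 : ℤ) ≤ (N.choose 3 : ℕ) := by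
    exact_mod_cast card_add_sum_choose_two_card_outNbrs_le hasym hH hcyc
  have hdeg : 2 * ∑ v, (d v : ℤ) + N = (N : ℤ) * N := by
    exact_mod_cast two_mul_sum_card_outNbrs hasym htot
  have hchoose : ∑ v, 2 * ((d v).choose 2 : ℤ) = ∑ v, ((d v : ℤ) ^ 2 - d v) :=
    sum_congr rfl fun v _ => by rw [two_mul_cast_choose_two]; ring
  have hconvex : ∑ v, 4 * ((N : ℤ) - 1) * (d v : ℤ) ≤
      ∑ v, (4 * (d v : ℤ) ^ 2 + (((N : ℤ) - 1) ^ 2 - ε)) := by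
    refine sum_le_sum fun v _ => ?_
    have hpar : Odd ((N : ℤ) - 1) ↔ Even N := by simp [parity_simps]
    have := four_mul_mul_le_four_mul_sq_add_sq ((N : ℤ) - 1) (d v)
    simp only [hpar] at this
    linarith
  rw [← mul_sum, sum_add_distrib, ← mul_sum, sum_const, card_univ, nsmul_eq_mul] at hconvex
  rw [← mul_sum, sum_sub_distrib] at hchoose
  have h3 := six_mul_cast_choose_three N
  have hdeg' := congrArg (((N : ℤ) - 1) * ·) hdeg
  split_ifs with h <;> simp only [ε, h, if_true, if_false] at hconvex <;> linarith

end Tournament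

section CyclicOrder

variable {n : ℕ} [NeZero n]

theorem ZMod.val_sub_add_val (a b : ZMod n) :
    (a - b).val + b.val = a.val ∨ (a - b).val + b.val = a.val + n := by
  rcases lt_or_ge ((a - b).val + b.val) n with h | h
  · left
    simpa using (ZMod.val_add_of_lt h).symm
  · right
    simpa using ZMod.val_add_val_of_le h

theorem cwList_three_iff (u w v : ZMod n) :
    CWList n [u, w, v] ↔ (u.val < w.val ∧ w.val < v.val) ∨
      (v.val < u.val ∧ u.val < w.val) ∨ (w.val < v.val ∧ v.val < u.val) := by
  show List.IsChain (· < ·) [0, (w - u).val, (v - u).val] ↔ _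
  have hw := ZMod.val_sub_add_val w u
  have hv := ZMod.val_sub_add_val v u
  have := ZMod.val_lt u
  have := ZMod.val_lt v
  have := ZMod.val_lt w
  have := ZMod.val_lt (w - u)
  have := ZMod.val_lt (v - u)
  simp only [List.isChain_cons_cons, List.isChain_singleton, and_true]
  omega

theorem cwList_four_iff (x c y d : ZMod n) :
    CWList n [x, c, y, d] ↔ CWList n [x, c, y] ∧ CWList n [y, d, x] := by
  have : CWList n [x, c, y, d] ↔ CWList n [x, c, y] ∧ CWList n [x, y, d] := by
    show List.IsChain (· < ·) [0, (c - x).val, (y - x).val, (d - x).val] ↔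
      List.IsChain (· < ·) [0, (c - x).val, (y - x).val] ∧
        List.IsChain (· < ·) [0, (y - x).val, (d - x).val]
    simp only [List.isChain_cons_cons, List.isChain_singleton, and_true]
    omega
  rw [this, cwList_three_iff, cwList_three_iff, cwList_three_iff]
  omega

theorem cwList_or_cwList {p q v : ZMod n} (hpq : p ≠ q) (hpv : p ≠ v) (hqv : q ≠ v) :
    CWList n [p, q, v] ∨ CWList n [q, p, v] := by
  have := (ZMod.val_injective n).ne hpq
  have := (ZMod.val_injective n).ne hpv
  have := (ZMod.val_injective n).ne hqv
  rw [cwList_three_iff, cwList_three_iff]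
  omega

end CyclicOrder

section Construction

variable {n : ℕ}

theorem image_val_natCast_triple {a b c : ℕ} (ha : a < n) (hb : b < n) (hc : c < n) :
    ({(a : ZMod n), (b : ZMod n), (c : ZMod n)} : Finset (ZMod n)).image ZMod.val = {a, b, c} := by
  simp [image_insert, ZMod.val_natCast, Nat.mod_eq_of_lt, ha, hb, hc]

-- `⟨a, s, i⟩` encodes the triple `a < a + 2i + 1 < a + 2s + 2`, whose two inner gaps are odd
def oddGapParams (n : ℕ) : Finset ((_ : ℕ) × (_ : ℕ) × ℕ) :=
  (range n).sigma fun a => (range ((n - 1 - a) / 2)).sigma fun s => range (s + 1)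

def oddGapTriple (n : ℕ) (p : (_ : ℕ) × (_ : ℕ) × ℕ) : Finset (ZMod n) :=
  {(p.1 : ZMod n), ((p.1 + 2 * p.2.2 + 1 : ℕ) : ZMod n), ((p.1 + 2 * p.2.1 + 2 : ℕ) : ZMod n)}

def oddGapHypergraph (n : ℕ) : Finset (Finset (ZMod n)) :=
  (oddGapParams n).image (oddGapTriple n)

theorem exists_of_mem_oddGapHypergraph {e : Finset (ZMod n)}
    (he : e ∈ oddGapHypergraph n) :
    ∃ a s i : ℕ, i ≤ s ∧ a + 2 * s + 2 < n ∧
      e = {(a : ZMod n), ((a + 2 * i + 1 : ℕ) : ZMod n), ((a + 2 * s + 2 : ℕ) : ZMod n)} := by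
  obtain ⟨⟨a, s, i⟩, hp, rfl⟩ := mem_image.mp he
  simp only [oddGapParams, mem_sigma, mem_range] at hp
  exact ⟨a, s, i, by omega, by omega, rfl⟩

theorem injOn_oddGapTriple : Set.InjOn (oddGapTriple n) (oddGapParams n) := by
  rintro ⟨a, s, i⟩ hp ⟨a', s', i'⟩ hp' h
  simp only [oddGapParams, coe_sigma, Set.mem_sigma_iff, coe_range, Set.mem_Iio] at hp hp'
  have h := congrArg (image ZMod.val) h
  simp only [oddGapTriple] at h
  rw [image_val_natCast_triple (by omega) (by omega) (by omega),
    image_val_natCast_triple (by omega) (by omega) (by omega)] at h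
  have key := fun m => Finset.ext_iff.mp h m
  have h1 := key a
  have h2 := key (a + 2 * i + 1)
  have h3 := key (a + 2 * s + 2)
  have h4 := key a'
  have h5 := key (a' + 2 * i' + 1)
  have h6 := key (a' + 2 * s' + 2)
  simp only [mem_insert, mem_singleton, true_or, or_true, true_iff, iff_true] at h1 h2 h3 h4 h5 h6
  obtain ⟨rfl, rfl, rfl⟩ : a = a' ∧ s = s' ∧ i = i' := by omega
  rfl

theorem even_val_add_iff_of_mem {u v w : ZMod n} (h : {u, v, w} ∈ oddGapHypergraph n) :
    Even (u.val + v.val) ↔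
      (u.val < w.val ∧ w.val < v.val) ∨ (v.val < w.val ∧ w.val < u.val) := by
  obtain ⟨a, s, i, his, hs, he⟩ := exists_of_mem_oddGapHypergraph h
  have h := congrArg (image ZMod.val) he
  rw [image_val_natCast_triple (by omega) (by omega) (by omega)] at h
  simp only [image_insert, image_singleton] at h
  have key := fun m => Finset.ext_iff.mp h m
  have h1 := key a
  have h2 := key (a + 2 * i + 1)
  have h3 := key (a + 2 * s + 2)
  have h4 := key u.val
  have h5 := key v.val
  have h6 := key w.val
  simp only [mem_insert, mem_singleton, true_or, or_true, true_iff, iff_true] at h1 h2 h3 h4 h5 h6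
  rw [Nat.even_iff]
  omega

theorem not_hasD1_oddGapHypergraph [NeZero n] : ¬ HasD1 n (oddGapHypergraph n) := by
  rintro ⟨x, c, y, d, hcw, hc, hd⟩
  rw [cwList_four_iff, cwList_three_iff, cwList_three_iff] at hcw
  have hxyc := even_val_add_iff_of_mem hc
  have hxyd := even_val_add_iff_of_mem hd
  rw [Nat.even_iff] at hxyc hxyd
  omega

theorem isCgh_oddGapHypergraph [NeZero n] : IsCgh n (oddGapHypergraph n) := by
  intro e he
  obtain ⟨a, s, i, his, hs, rfl⟩ := exists_of_mem_oddGapHypergraph he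
  rw [← card_image_of_injective _ (ZMod.val_injective n),
    image_val_natCast_triple (by omega) (by omega) (by omega)]
  exact card_eq_three.mpr ⟨_, _, _, by omega, by omega, by omega, rfl⟩

theorem card_oddGapParams :
    #(oddGapParams n) = ∑ m ∈ range n, (m / 2 + 1).choose 2 := by
  rw [oddGapParams, card_sigma, ← sum_range_reflect]
  refine sum_congr rfl fun a ha => ?_
  rw [card_sigma]
  simp only [card_range, sum_range_add_one_eq_choose_two]
  rw [Nat.sub_sub_self (Nat.le_sub_one_of_lt (mem_range.mp ha))]

theorem card_oddGapHypergraph : #(oddGapHypergraph n) = nabla n := by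
  rw [oddGapHypergraph, card_image_of_injOn injOn_oddGapTriple, card_oddGapParams,
    nabla_eq_sum_choose_two]

end Construction

section UpperBound

variable {n : ℕ} [NeZero n] {H : Finset (Finset (ZMod n))}

def arcRel (H : Finset (Finset (ZMod n))) (u v : ZMod n) : Prop :=
  ∃ w, CWList n [u, w, v] ∧ {u, v, w} ∈ H

theorem arcRel_asymm (hD1 : ¬ HasD1 n H) (u v : ZMod n) : arcRel H u v → ¬ arcRel H v u := by
  rintro ⟨w, huwv, huvw⟩ ⟨w', hvwu, hvuw⟩
  rw [insert_comm] at hvuw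
  exact hD1 ⟨u, w, v, w', (cwList_four_iff u w v w').mpr ⟨huwv, hvwu⟩, huvw, hvuw⟩

theorem exists_arcRel_of_mem (hH : IsCgh n H) {e : Finset (ZMod n)} (he : e ∈ H) {v : ZMod n}
    (hv : v ∈ e) : ∃ u ∈ e, arcRel H u v := by
  have h2 : #(e.erase v) = 2 := by rw [card_erase_of_mem hv, hH e he]
  obtain ⟨p, q, hpq, hpq_eq⟩ := card_eq_two.mp h2
  have hp : p ∈ e.erase v := by simp [hpq_eq]
  have hq : q ∈ e.erase v := by simp [hpq_eq]
  have he' : e = {v, p, q} := by rw [← insert_erase hv, hpq_eq]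
  rcases cwList_or_cwList hpq (ne_of_mem_erase hp) (ne_of_mem_erase hq) with h | h
  · exact ⟨p, mem_of_mem_erase hp, q, h, by rwa [he', insert_comm] at he⟩
  · exact ⟨q, mem_of_mem_erase hq, p, h, by rwa [he', pair_comm, insert_comm] at he⟩

theorem card_le_nabla_of_not_hasD1 (hH : IsCgh n H) (hD1 : ¬ HasD1 n H) : #H ≤ nabla n := by
  classical
  obtain ⟨t, harc, hasym, htot⟩ := exists_tournament_extending (arcRel H) (arcRel_asymm hD1)
  have hcyc : ∀ e ∈ H, ∀ v ∈ e, ∃ u ∈ e, t u v := fun e he v hv =>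
    (exists_arcRel_of_mem hH he hv).imp fun u ⟨hu, huv⟩ => ⟨hu, harc u v huv⟩
  have h := card_cyclic_triangles_le hasym htot hH hcyc
  rw [ZMod.card, ← twenty_four_mul_sum_choose_two, ← nabla_eq_sum_choose_two] at h
  exact_mod_cast (by linarith : (#H : ℤ) ≤ nabla n)

end UpperBound

theorem ex_D1 (n : ℕ) (hn : 3 ≤ n) :
    IsGreatest {m : ℕ | ∃ H : Finset (Finset (ZMod n)),
        IsCgh n H ∧ ¬ HasD1 n H ∧ H.card = m}
      (nabla n) := by
  have : NeZero n := ⟨by omega⟩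
  refine ⟨⟨oddGapHypergraph n, isCgh_oddGapHypergraph, not_hasD1_oddGapHypergraph,
    card_oddGapHypergraph⟩, ?_⟩
  rintro m ⟨H, hH, hD1, rfl⟩
  exact card_le_nabla_of_not_hasD1 hH hD1
end

section
/- For every integer n ≥ 7, the maximum number of triples in an ordered 3-uniform hypergraph on the linearly ordered vertex set v_0 < v_1 < … < v_{n−1} containing no two triples {v_i,v_j,v_k} and {v_{i'},v_{j'},v_{k'}} with v_i < v_{i'} < v_j < v_{j'} < v_k < v_{k'} equals C(n,3) − C(n−3,3). -/
/-- The ordered 3-uniform hypergraph `H` on the linearly ordered vertex set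
`Fin n` contains the ordered configuration `M₃`: two triples
`{i, j, k}` and `{i', j', k'}` with `i < i' < j < j' < k < k'`. -/
def HasOrderedM3 (n : ℕ) (H : Finset (Finset (Fin n))) : Prop :=
  ∃ i i' j j' k k' : Fin n,
    i < i' ∧ i' < j ∧ j < j' ∧ j' < k ∧ k < k' ∧
    ({i, j, k} : Finset (Fin n)) ∈ H ∧ ({i', j', k'} : Finset (Fin n)) ∈ H

/-!
A triple `a < b < c` is spread if `0 < a`, `a + 2 ≤ b` and `b + 2 ≤ c`. Shifting by `(1, 2, 3)`
shows that there are `C(n - 3, 3)` spread triples, and the second triple of an `M₃` is always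
spread, so the non-spread triples form an `M₃`-free family of the claimed size.

Conversely, let `H` be `M₃`-free and `S` the set of its spread triples. For `(a, b, c) ∈ S` every
point `(x, y)` of the rectangle `(a, b) × (b, c)` gives a non-spread triple `{0, x, y}` outside `H`,
because `0 < a < x < b < y < c`. So it suffices that the rectangles of a family `S` of spread
triples without interleaved pairs cover at least `|S|` points. Peel off the layer of triples with
the largest `c`: a triple of the layer whose interval `(a, b)` is crossed by another one of the
layer contributes its corner `(a, b)`, while the uncrossed intervals form a laminar family, which
has at most as many members as its union has points `x`, each contributing `(x, c - 1)`. A lower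
triple whose rectangle contained one of these points would be interleaved with a triple of the
layer.
-/

open Finset

def Crosses (w w' : ℕ × ℕ) : Prop := w.1 < w'.1 ∧ w'.1 < w.2 ∧ w.2 < w'.2

section Laminar

variable (W : Finset (ℕ × ℕ))

def innerPoint (w : ℕ × ℕ) : ℕ :=
  (insert (w.2 - 1) ((W.filter fun w' => w'.2 = w.2 ∧ w.1 < w'.1).image Prod.fst)).min'
    (insert_nonempty _ _)

lemma innerPoint_le_pred (w : ℕ × ℕ) : innerPoint W w ≤ w.2 - 1 :=
  min'_le _ _ (mem_insert_self _ _)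

lemma innerPoint_eq_pred_or_mem (w : ℕ × ℕ) :
    innerPoint W w = w.2 - 1 ∨ (innerPoint W w, w.2) ∈ W ∧ w.1 < innerPoint W w := by
  have h := min'_mem _ (insert_nonempty (w.2 - 1)
    ((W.filter fun w' => w'.2 = w.2 ∧ w.1 < w'.1).image Prod.fst))
  simp only [mem_insert, mem_image, mem_filter] at h
  obtain h | ⟨w', ⟨hw', hw'2, hlt⟩, h⟩ := h
  · exact Or.inl h
  · rw [innerPoint, ← h, ← hw'2]
    exact Or.inr ⟨hw', hlt⟩

lemma lt_innerPoint {w : ℕ × ℕ} (hw : w.1 + 2 ≤ w.2) : w.1 < innerPoint W w := by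
  obtain h | h := innerPoint_eq_pred_or_mem W w
  · omega
  · exact h.2

variable {W}

lemma innerPoint_le_of_mem {w : ℕ × ℕ} {a : ℕ} (h : (a, w.2) ∈ W) (hlt : w.1 < a) :
    innerPoint W w ≤ a :=
  min'_le _ _ (mem_insert_of_mem (mem_image.2 ⟨_, mem_filter.2 ⟨h, rfl, hlt⟩, rfl⟩))

/-- Intervals with a common right end get distinct points by minimality, and a collision between
different right ends would exhibit a crossing. -/
lemma innerPoint_ne {w₁ w₂ : ℕ × ℕ} (hw₁ : w₁ ∈ W) (hw₂ : w₂ ∈ W)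
    (hW : ∀ w ∈ W, w.1 + 2 ≤ w.2) (hlam : ∀ w ∈ W, ∀ w' ∈ W, ¬Crosses w w')
    (h : w₁.2 < w₂.2 ∨ w₁.2 = w₂.2 ∧ w₁.1 < w₂.1) :
    innerPoint W w₁ ≠ innerPoint W w₂ := by
  intro heq
  have h₁ := innerPoint_le_pred W w₁
  have h₂ := lt_innerPoint W (hW w₁ hw₁)
  obtain h | ⟨h, hlt⟩ := h
  · obtain hpred | ⟨hmem, -⟩ := innerPoint_eq_pred_or_mem W w₂
    · omega
    · exact hlam w₁ hw₁ _ hmem ⟨by omega, by omega, h⟩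
  · have := innerPoint_le_of_mem (w := w₁) (by rw [h]; exact hw₂) hlt
    have := lt_innerPoint W (hW w₂ hw₂)
    omega

theorem card_le_card_biUnion_Ioo (hW : ∀ w ∈ W, w.1 + 2 ≤ w.2)
    (hlam : ∀ w ∈ W, ∀ w' ∈ W, ¬Crosses w w') :
    #W ≤ #(W.biUnion fun w => Ioo w.1 w.2) := by
  refine card_le_card_of_injOn (innerPoint W) (fun w hw => mem_biUnion.2 ⟨w, hw, ?_⟩) ?_
  · have := innerPoint_le_pred W w
    have := hW w hw
    exact mem_Ioo.2 ⟨lt_innerPoint W (hW w hw), by omega⟩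
  · intro w₁ hw₁ w₂ hw₂ heq
    by_contra hne
    rcases lt_trichotomy w₁.2 w₂.2 with h | h | h
    · exact innerPoint_ne hw₁ hw₂ hW hlam (Or.inl h) heq
    · rcases Nat.lt_or_gt_of_ne (fun h' => hne (Prod.ext h' h)) with h' | h'
      · exact innerPoint_ne hw₁ hw₂ hW hlam (Or.inr ⟨h, h'⟩) heq
      · exact innerPoint_ne hw₂ hw₁ hW hlam (Or.inr ⟨h.symm, h'⟩) heq.symm
    · exact innerPoint_ne hw₂ hw₁ hW hlam (Or.inl h) heq.symm

end Laminar

def rect (t : ℕ × ℕ × ℕ) : Finset (ℕ × ℕ) := Ioo t.1 t.2.1 ×ˢ Ioo t.2.1 t.2.2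

@[simp] lemma mem_rect {p : ℕ × ℕ} {t : ℕ × ℕ × ℕ} :
    p ∈ rect t ↔ (t.1 < p.1 ∧ p.1 < t.2.1) ∧ t.2.1 < p.2 ∧ p.2 < t.2.2 := by
  simp [rect]

def Interleaved (t t' : ℕ × ℕ × ℕ) : Prop :=
  t.1 < t'.1 ∧ t'.1 < t.2.1 ∧ t.2.1 < t'.2.1 ∧ t'.2.1 < t.2.2 ∧ t.2.2 < t'.2.2

theorem card_pairs_le_card_biUnion_rect_sdiff {W : Finset (ℕ × ℕ)} {M : ℕ} {S : Finset (ℕ × ℕ × ℕ)}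
    (hW : ∀ w ∈ W, w.1 + 2 ≤ w.2 ∧ w.2 + 2 ≤ M) (hS : ∀ t ∈ S, t.2.2 < M)
    (hfree : ∀ t ∈ S, ∀ w ∈ W, ¬Interleaved t (w.1, w.2, M)) :
    #W ≤ #((W.biUnion fun w => rect (w.1, w.2, M)) \ S.biUnion rect) := by
  classical
  set C := W.filter fun w => ∃ w' ∈ W, Crosses w' w
  set L := W.filter fun w => ¬∃ w' ∈ W, Crosses w' w
  set R := (L.biUnion fun w => Ioo w.1 w.2) ×ˢ {M - 1}
  have hL : #L ≤ #R := by
    rw [card_product, card_singleton, mul_one]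
    refine card_le_card_biUnion_Ioo (fun w hw => (hW w (mem_filter.1 hw).1).1) ?_
    intro w hw w' hw' hcross
    exact (mem_filter.1 hw').2 ⟨w, (mem_filter.1 hw).1, hcross⟩
  have hCR : Disjoint C R := by
    rw [disjoint_left]
    rintro p hpC hpR
    have := (hW p (mem_filter.1 hpC).1).2
    have := mem_singleton.1 (mem_product.1 hpR).2
    omega
  have hC : C ⊆ (W.biUnion fun w => rect (w.1, w.2, M)) \ S.biUnion rect := by
    intro p hp
    obtain ⟨hpW, w, hw, hcross⟩ := mem_filter.1 hp
    have := hW p hpW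
    simp only [mem_sdiff, mem_biUnion]
    refine ⟨⟨w, hw, mem_rect.2 ⟨⟨hcross.1, hcross.2.1⟩, hcross.2.2, by dsimp only; omega⟩⟩, ?_⟩
    rintro ⟨t, ht, hpt⟩
    rw [mem_rect] at hpt
    exact hfree t ht p hpW ⟨hpt.1.1, hpt.1.2, hpt.2.1, hpt.2.2, hS t ht⟩
  have hR : R ⊆ (W.biUnion fun w => rect (w.1, w.2, M)) \ S.biUnion rect := by
    intro p hp
    simp only [R, mem_product, mem_biUnion, mem_singleton, mem_Ioo] at hp
    obtain ⟨⟨w, hw, hpw⟩, hp2⟩ := hp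
    have := hW w (mem_filter.1 hw).1
    simp only [mem_sdiff, mem_biUnion]
    refine ⟨⟨w, (mem_filter.1 hw).1, mem_rect.2 ⟨hpw, by dsimp only; omega, by dsimp only; omega⟩⟩,
      ?_⟩
    rintro ⟨t, ht, hpt⟩
    have := hS t ht
    have := (mem_rect.1 hpt).2.2
    omega
  calc #W = #C + #L := (card_filter_add_card_filter_not _).symm
    _ ≤ #C + #R := by gcongr
    _ = #(C ∪ R) := (card_union_of_disjoint hCR).symm
    _ ≤ _ := card_le_card (union_subset hC hR)

theorem card_le_card_biUnion_rect_sdiff {P S : Finset (ℕ × ℕ × ℕ)} {M : ℕ}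
    (hP : ∀ t ∈ P, t.1 + 2 ≤ t.2.1 ∧ t.2.1 + 2 ≤ t.2.2 ∧ t.2.2 = M) (hS : ∀ t ∈ S, t.2.2 < M)
    (hfree : ∀ t ∈ S, ∀ t' ∈ P, ¬Interleaved t t') :
    #P ≤ #(P.biUnion rect \ S.biUnion rect) := by
  set W := P.image fun t => (t.1, t.2.1)
  have hPW : #P = #W := by
    refine (card_image_of_injOn fun t ht t' ht' h => ?_).symm
    simp only [Prod.mk.injEq] at h
    exact Prod.ext h.1 (Prod.ext h.2 ((hP t ht).2.2.trans (hP t' ht').2.2.symm))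
  have hWP : (W.biUnion fun w => rect (w.1, w.2, M)) = P.biUnion rect := by
    rw [image_biUnion]
    exact biUnion_congr rfl fun t ht => by rw [← (hP t ht).2.2]
  rw [hPW, ← hWP]
  refine card_pairs_le_card_biUnion_rect_sdiff ?_ hS ?_
  · simp only [W, mem_image]
    rintro _ ⟨t, ht, rfl⟩
    have := hP t ht
    constructor <;> omega
  · simp only [W, mem_image]
    rintro t ht _ ⟨t', ht', rfl⟩
    rw [← (hP t' ht').2.2]
    exact hfree t ht t' ht'

theorem card_le_card_biUnion_rect (S : Finset (ℕ × ℕ × ℕ))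
    (hS : ∀ t ∈ S, t.1 + 2 ≤ t.2.1 ∧ t.2.1 + 2 ≤ t.2.2)
    (hfree : ∀ t ∈ S, ∀ t' ∈ S, ¬Interleaved t t') : #S ≤ #(S.biUnion rect) := by
  induction S using Finset.strongInduction with | H S ih => ?_
  obtain rfl | hne := S.eq_empty_or_nonempty
  · simp
  set M := S.sup fun t => t.2.2
  set P := S.filter fun t => t.2.2 = M
  set S' := S.filter fun t => ¬t.2.2 = M
  have hP : ∀ t ∈ P, t ∈ S ∧ t.2.2 = M := fun t ht => mem_filter.1 ht
  have hS' : ∀ t ∈ S', t ∈ S ∧ t.2.2 < M := fun t ht =>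
    ⟨(mem_filter.1 ht).1, lt_of_le_of_ne (le_sup (f := fun t => t.2.2) (mem_filter.1 ht).1)
      (mem_filter.1 ht).2⟩
  have hS'S : S' ⊂ S := by
    obtain ⟨t, ht, htM⟩ := exists_mem_eq_sup S hne fun t => t.2.2
    exact filter_ssubset.2 ⟨t, ht, not_not.2 htM.symm⟩
  have hlayer : #P ≤ #(P.biUnion rect \ S'.biUnion rect) := by
    refine card_le_card_biUnion_rect_sdiff (fun t ht => ?_) (fun t ht => (hS' t ht).2)
      fun t ht t' ht' => hfree t (hS' t ht).1 t' (hP t' ht').1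
    exact ⟨(hS t (hP t ht).1).1, (hS t (hP t ht).1).2, (hP t ht).2⟩
  have ih' : #S' ≤ #(S'.biUnion rect) := ih S' hS'S (fun t ht => hS t (hS' t ht).1)
    fun t ht t' ht' => hfree t (hS' t ht).1 t' (hS' t' ht').1
  calc #S = #P + #S' := (card_filter_add_card_filter_not _).symm
    _ ≤ #(P.biUnion rect \ S'.biUnion rect) + #(S'.biUnion rect) := add_le_add hlayer ih'
    _ = #(S.biUnion rect) := by
      rw [card_sdiff_add_card, ← union_biUnion, filter_union_filter_not_eq]

def triple (t : ℕ × ℕ × ℕ) : Finset ℕ := {t.1, t.2.1, t.2.2}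

lemma triple_injOn : Set.InjOn triple {t | t.1 < t.2.1 ∧ t.2.1 < t.2.2} := by
  rintro ⟨a, b, c⟩ ⟨hab, hbc⟩ ⟨a', b', c'⟩ ⟨hab', hbc'⟩ h
  simp only [triple, Finset.ext_iff, mem_insert, mem_singleton] at h hab hbc hab' hbc'
  have := h a; have := h b; have := h c; have := h a'; have := h b'; have := h c'
  simp only [Prod.mk.injEq]
  omega

lemma exists_triple_eq {e : Finset ℕ} (he : #e = 3) :
    ∃ t : ℕ × ℕ × ℕ, (t.1 < t.2.1 ∧ t.2.1 < t.2.2) ∧ triple t = e := by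
  set f := e.orderEmbOfFin he
  refine ⟨(f 0, f 1, f 2), ⟨f.strictMono (by decide), f.strictMono (by decide)⟩, ?_⟩
  conv_rhs => rw [← image_orderEmbOfFin_univ e he]
  ext x
  simp only [triple, mem_insert, mem_singleton, mem_image, mem_univ, true_and, Fin.exists_fin_succ,
    Fin.exists_fin_zero]
  simp only [or_false, eq_comm (a := x)]
  rfl

lemma card_triple {t : ℕ × ℕ × ℕ} (h : t.1 < t.2.1 ∧ t.2.1 < t.2.2) : #(triple t) = 3 := by
  rw [triple, card_eq_three]
  exact ⟨_, _, _, by omega, by omega, by omega, rfl⟩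

def increasingTriples (m : ℕ) : Finset (ℕ × ℕ × ℕ) :=
  (range m ×ˢ range m ×ˢ range m).filter fun t => t.1 < t.2.1 ∧ t.2.1 < t.2.2

@[simp] lemma mem_increasingTriples {m : ℕ} {t : ℕ × ℕ × ℕ} :
    t ∈ increasingTriples m ↔ (t.1 < t.2.1 ∧ t.2.1 < t.2.2) ∧ t.2.2 < m := by
  simp only [increasingTriples, mem_filter, mem_product, mem_range]
  omega

lemma image_triple_increasingTriples (m : ℕ) :
    (increasingTriples m).image triple = powersetCard 3 (range m) := by
  ext e
  simp only [mem_image, mem_increasingTriples, mem_powersetCard]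
  constructor
  · rintro ⟨t, ⟨ht, htm⟩, rfl⟩
    refine ⟨fun x hx => ?_, card_triple ht⟩
    simp only [triple, mem_insert, mem_singleton] at hx
    rw [mem_range]
    omega
  · rintro ⟨hsub, he⟩
    obtain ⟨t, ht, rfl⟩ := exists_triple_eq he
    exact ⟨t, ⟨ht, mem_range.1 (hsub (by simp [triple]))⟩, rfl⟩

lemma card_increasingTriples (m : ℕ) : #(increasingTriples m) = m.choose 3 := by
  rw [← card_image_of_injOn (triple_injOn.mono fun t ht => (mem_increasingTriples.1 ht).1),
    image_triple_increasingTriples, card_powersetCard, card_range]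

def spreadTriples (n : ℕ) : Finset (ℕ × ℕ × ℕ) :=
  (range n ×ˢ range n ×ˢ range n).filter fun t => 1 ≤ t.1 ∧ t.1 + 2 ≤ t.2.1 ∧ t.2.1 + 2 ≤ t.2.2

@[simp] lemma mem_spreadTriples {n : ℕ} {t : ℕ × ℕ × ℕ} :
    t ∈ spreadTriples n ↔ (1 ≤ t.1 ∧ t.1 + 2 ≤ t.2.1 ∧ t.2.1 + 2 ≤ t.2.2) ∧ t.2.2 < n := by
  simp only [spreadTriples, mem_filter, mem_product, mem_range]
  omega

lemma card_spreadTriples (n : ℕ) : #(spreadTriples n) = (n - 3).choose 3 := by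
  rw [← card_increasingTriples]
  refine card_nbij' (fun t => (t.1 - 1, t.2.1 - 2, t.2.2 - 3))
    (fun t => (t.1 + 1, t.2.1 + 2, t.2.2 + 3)) ?_ ?_ ?_ ?_ <;>
  · rintro ⟨a, b, c⟩ h
    simp only [mem_coe, mem_spreadTriples, mem_increasingTriples, Prod.mk.injEq] at h ⊢
    omega

def HasM3 {α : Type*} [LinearOrder α] (H : Finset (Finset α)) : Prop :=
  ∃ i i' j j' k k' : α,
    i < i' ∧ i' < j ∧ j < j' ∧ j' < k ∧ k < k' ∧
    ({i, j, k} : Finset α) ∈ H ∧ ({i', j', k'} : Finset α) ∈ H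

lemma hasM3_of_interleaved {H : Finset (Finset ℕ)} {t t' : ℕ × ℕ × ℕ} (h : Interleaved t t')
    (ht : triple t ∈ H) (ht' : triple t' ∈ H) : HasM3 H :=
  ⟨t.1, t'.1, t.2.1, t'.2.1, t.2.2, t'.2.2, h.1, h.2.1, h.2.2.1, h.2.2.2.1, h.2.2.2.2, ht, ht'⟩

lemma hasOrderedM3_iff_hasM3 {n : ℕ} {H : Finset (Finset (Fin n))} :
    HasOrderedM3 n H ↔ HasM3 H :=
  Iff.rfl

def nonSpread (n : ℕ) : Finset (Finset ℕ) :=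
  powersetCard 3 (range n) \ (spreadTriples n).image triple

lemma image_triple_spreadTriples_subset (n : ℕ) :
    (spreadTriples n).image triple ⊆ powersetCard 3 (range n) := by
  rw [← image_triple_increasingTriples]
  refine image_subset_image fun t ht => ?_
  simp only [mem_spreadTriples, mem_increasingTriples] at ht ⊢
  omega

lemma nonSpread_subset (n : ℕ) : nonSpread n ⊆ powersetCard 3 (range n) := sdiff_subset

lemma card_nonSpread (n : ℕ) : #(nonSpread n) = n.choose 3 - (n - 3).choose 3 := by
  have hinj : Set.InjOn triple (spreadTriples n) := triple_injOn.mono fun t ht => by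
    have := mem_spreadTriples.1 ht
    exact ⟨by omega, by omega⟩
  rw [nonSpread, card_sdiff_of_subset (image_triple_spreadTriples_subset n),
    card_image_of_injOn hinj, card_spreadTriples, card_powersetCard, card_range]

lemma not_hasM3_nonSpread (n : ℕ) : ¬HasM3 (nonSpread n) := by
  rintro ⟨i, i', j, j', k, k', h1, h2, h3, h4, h5, -, he⟩
  obtain ⟨hsub, hspread⟩ := mem_sdiff.1 he
  have hk' : k' < n := mem_range.1 ((mem_powersetCard.1 hsub).1 (by simp))
  refine hspread (mem_image_of_mem triple (a := (i', j', k')) ?_)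
  simp only [mem_spreadTriples]
  omega

lemma triple_zero_mem_nonSpread {n : ℕ} {p : ℕ × ℕ} (h1 : 0 < p.1) (h2 : p.1 < p.2)
    (h3 : p.2 < n) : triple (0, p.1, p.2) ∈ nonSpread n := by
  refine mem_sdiff.2 ⟨?_, fun h => ?_⟩
  · rw [← image_triple_increasingTriples]
    exact mem_image_of_mem triple (by simp only [mem_increasingTriples]; omega)
  · obtain ⟨t, ht, he⟩ := mem_image.1 h
    have : 0 ∈ triple t := by rw [he]; simp [triple]
    simp only [triple, mem_insert, mem_singleton, mem_spreadTriples] at this ht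
    omega

theorem card_biUnion_rect_le_card_nonSpread_sdiff {n : ℕ} {H : Finset (Finset ℕ)}
    {S : Finset (ℕ × ℕ × ℕ)} (hS : ∀ t ∈ S, t ∈ spreadTriples n ∧ triple t ∈ H)
    (hfree : ¬HasM3 H) : #(S.biUnion rect) ≤ #(nonSpread n \ H) := by
  have hB : ∀ p ∈ S.biUnion rect, ∃ t ∈ S, 0 < t.1 ∧ t.1 < p.1 ∧ p.1 < t.2.1 ∧ t.2.1 < p.2 ∧
      p.2 < t.2.2 ∧ t.2.2 < n := by
    intro p hp
    obtain ⟨t, ht, hpt⟩ := mem_biUnion.1 hp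
    have := mem_spreadTriples.1 (hS t ht).1
    rw [mem_rect] at hpt
    exact ⟨t, ht, by omega⟩
  refine card_le_card_of_injOn (fun p => triple (0, p.1, p.2)) (fun p hp => ?_) ?_
  · obtain ⟨t, ht, h⟩ := hB p hp
    refine mem_sdiff.2 ⟨triple_zero_mem_nonSpread (by omega) (by omega) (by omega), fun hpH => ?_⟩
    exact hfree (hasM3_of_interleaved (t := (0, p.1, p.2)) ⟨h.1, h.2.1, h.2.2.1, h.2.2.2.1,
      h.2.2.2.2.1⟩ hpH (hS t ht).2)
  · intro p hp p' hp' hpp'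
    obtain ⟨t, -, h⟩ := hB p hp
    obtain ⟨t', -, h'⟩ := hB p' hp'
    have := triple_injOn (x₁ := (0, p.1, p.2)) (x₂ := (0, p'.1, p'.2))
      ⟨(by omega : 0 < p.1), (by omega : p.1 < p.2)⟩
      ⟨(by omega : 0 < p'.1), (by omega : p'.1 < p'.2)⟩ hpp'
    simp only [Prod.mk.injEq] at this
    exact Prod.ext this.2.1 this.2.2

theorem card_le_of_not_hasM3 {n : ℕ} {H : Finset (Finset ℕ)} (hH : H ⊆ powersetCard 3 (range n))
    (hfree : ¬HasM3 H) : #H ≤ n.choose 3 - (n - 3).choose 3 := by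
  set S := (spreadTriples n).filter (triple · ∈ H)
  have hS : ∀ t ∈ S, t ∈ spreadTriples n ∧ triple t ∈ H := fun t ht => mem_filter.1 ht
  have hSB : #S ≤ #(S.biUnion rect) := by
    refine card_le_card_biUnion_rect S (fun t ht => (mem_spreadTriples.1 (hS t ht).1).1.2) ?_
    exact fun t ht t' ht' h => hfree (hasM3_of_interleaved h (hS t ht).2 (hS t' ht').2)
  have hHS : H ⊆ S.image triple ∪ nonSpread n ∩ H := by
    intro e he
    by_cases hspread : e ∈ (spreadTriples n).image triple
    · obtain ⟨t, ht, rfl⟩ := mem_image.1 hspread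
      exact mem_union_left _ (mem_image_of_mem _ (mem_filter.2 ⟨ht, he⟩))
    · exact mem_union_right _ (mem_inter.2 ⟨mem_sdiff.2 ⟨hH he, hspread⟩, he⟩)
  calc #H ≤ #(S.image triple) + #(nonSpread n ∩ H) := (card_le_card hHS).trans (card_union_le _ _)
    _ ≤ #(nonSpread n \ H) + #(nonSpread n ∩ H) := by
      grw [card_image_le, hSB, card_biUnion_rect_le_card_nonSpread_sdiff hS hfree]
    _ = n.choose 3 - (n - 3).choose 3 := by rw [card_sdiff_add_card_inter, card_nonSpread]

lemma exists_eq_triple_of_map_eq {α β : Type*} [DecidableEq α] [DecidableEq β] {f : α ↪ β}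
    {e : Finset α} {a b c : β} (h : e.map f = {a, b, c}) :
    ∃ x y z, f x = a ∧ f y = b ∧ f z = c ∧ e = {x, y, z} := by
  have hmem : ∀ u ∈ ({a, b, c} : Finset β), ∃ x ∈ e, f x = u := fun u hu => mem_map.1 (h ▸ hu)
  obtain ⟨x, -, rfl⟩ := hmem a (by simp)
  obtain ⟨y, -, rfl⟩ := hmem b (by simp)
  obtain ⟨z, -, rfl⟩ := hmem c (by simp)
  exact ⟨x, y, z, rfl, rfl, rfl, map_injective f (by simp [h])⟩

lemma hasM3_map_iff {α β : Type*} [LinearOrder α] [LinearOrder β] (f : α ↪o β)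
    {H : Finset (Finset α)} :
    HasM3 (H.map (mapEmbedding f.toEmbedding).toEmbedding) ↔ HasM3 H := by
  constructor
  · rintro ⟨i, i', j, j', k, k', h1, h2, h3, h4, h5, he, he'⟩
    obtain ⟨e, heH, hei⟩ := mem_map.1 he
    obtain ⟨e', heH', hei'⟩ := mem_map.1 he'
    obtain ⟨x, y, z, rfl, rfl, rfl, rfl⟩ := exists_eq_triple_of_map_eq hei
    obtain ⟨x', y', z', rfl, rfl, rfl, rfl⟩ := exists_eq_triple_of_map_eq hei'
    simp only [RelEmbedding.coe_toEmbedding, f.lt_iff_lt] at h1 h2 h3 h4 h5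
    exact ⟨x, x', y, y', z, z', h1, h2, h3, h4, h5, heH, heH'⟩
  · rintro ⟨i, i', j, j', k, k', h1, h2, h3, h4, h5, he, he'⟩
    refine ⟨f i, f i', f j, f j', f k, f k', f.lt_iff_lt.2 h1, f.lt_iff_lt.2 h2, f.lt_iff_lt.2 h3,
      f.lt_iff_lt.2 h4, f.lt_iff_lt.2 h5, mem_map.2 ⟨_, he, ?_⟩, mem_map.2 ⟨_, he', ?_⟩⟩ <;>
    simp

lemma powersetCard_range_eq_map (k n : ℕ) :
    powersetCard k (range n) = (powersetCard k (univ : Finset (Fin n))).map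
      (mapEmbedding (Fin.valOrderEmb n).toEmbedding).toEmbedding := by
  rw [← powersetCard_map]
  congr
  simp [Fin.valOrderEmb, Nat.Iio_eq_range]

theorem ex_ordered_M3_general (n : ℕ) :
    IsGreatest {m : ℕ | ∃ H : Finset (Finset (Fin n)),
        (∀ e ∈ H, e.card = 3) ∧ ¬ HasOrderedM3 n H ∧ H.card = m}
      (n.choose 3 - (n - 3).choose 3) := by
  set Φ := (mapEmbedding (Fin.valOrderEmb n).toEmbedding).toEmbedding
  refine ⟨?_, ?_⟩
  · obtain ⟨G, hG, hGN⟩ := subset_map_iff.1 <|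
      (nonSpread_subset n).trans (powersetCard_range_eq_map 3 n).subset
    refine ⟨G, fun e he => (mem_powersetCard.1 (hG he)).2, fun h => ?_, ?_⟩
    · exact not_hasM3_nonSpread n (hGN ▸ (hasM3_map_iff _).2 (hasOrderedM3_iff_hasM3.1 h))
    · rw [← card_map Φ, ← hGN, card_nonSpread]
  · rintro m ⟨H, h3, hfree, rfl⟩
    rw [← card_map Φ]
    refine card_le_of_not_hasM3 ?_ fun h => hfree (hasOrderedM3_iff_hasM3.2 ((hasM3_map_iff _).1 h))
    rw [powersetCard_range_eq_map]
    exact map_subset_map.2 fun e he => mem_powersetCard.2 ⟨subset_univ e, h3 e he⟩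

theorem ex_ordered_M3 (n : ℕ) (hn : 7 ≤ n) :
    IsGreatest {m : ℕ | ∃ H : Finset (Finset (Fin n)),
        (∀ e ∈ H, e.card = 3) ∧ ¬ HasOrderedM3 n H ∧ H.card = m}
      (n.choose 3 - (n - 3).choose 3) :=
  ex_ordered_M3_general n
end

section
/- For every integer n ≥ 5, there exists an S_2-free cgh on Ω_n with at least ⌊n²/4⌋ − 1 triples; that is, ex_circ(n, S_2) ≥ ⌊n²/4⌋ − 1. -/
/-- `H` contains a copy of the configuration `S₂`: two triples sharing exactly
the vertex `v`, with the five vertices in clockwise cyclic order `v, b₁, a₁, a₂, b₂`. -/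
def HasS2 (n : ℕ) (H : Finset (Finset (ZMod n))) : Prop :=
  ∃ v a₁ a₂ b₁ b₂ : ZMod n,
    CWList n [v, b₁, a₁, a₂, b₂] ∧
    ({v, a₁, a₂} : Finset (ZMod n)) ∈ H ∧ ({v, b₁, b₂} : Finset (ZMod n)) ∈ H

/-!
Let `L` be the arc of the first `t` vertices and `R` the remaining arc. Take every triple formed
by a side `{y, y + 1}` of the polygon lying in `R` together with either an apex in `L` or the
next vertex `y + 2`. In a copy of `S₂` the vertex `v` is adjacent to neither `a₁` nor `a₂`, so the
triple `{v, a₁, a₂}` has side `{a₁, a₂}` and apex `v ∈ L`. As sides avoid `L`, `v` is also the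
apex of `{v, b₁, b₂}`, forcing `b₁, b₂` to be adjacent, which they are not since `a₁` and `v` separate
them. There are `t (|R| - 1) + (|R| - 2)` such triples, which is `⌊n²/4⌋ - 1` for
`t = ⌊(n - 2)/2⌋`.
-/

open Finset

variable {n : ℕ}

lemma natCast_eq_natCast_iff_of_lt {a b : ℕ} (ha : a < n) (hb : b < n) :
    (a : ZMod n) = b ↔ a = b := by
  rw [ZMod.natCast_eq_natCast_iff', Nat.mod_eq_of_lt ha, Nat.mod_eq_of_lt hb]

lemma ZMod.val_add_one_cases [NeZero n] (a : ZMod n) :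
    (a + 1).val = a.val + 1 ∨ a.val + 1 = n ∧ (a + 1).val = 0 := by
  rcases eq_or_ne n 1 with rfl | hn
  · exact .inr ⟨by simp [Subsingleton.elim a 0], ZMod.val_eq_zero _ |>.2 (Subsingleton.elim _ _)⟩
  have h1 : (1 : ZMod n).val = 1 := by rw [ZMod.val_one_eq_one_mod, Nat.one_mod_eq_one.2 hn]
  by_cases h : a.val + 1 < n
  · exact .inl (by rw [ZMod.val_add_of_lt (by rwa [h1]), h1])
  · have := ZMod.val_add_val_of_le (a := a) (b := 1) (by rw [h1]; omega)
    have := a.val_lt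
    exact .inr ⟨by omega, by omega⟩

lemma val_sub_of_add_one_eq [NeZero n] {v x y : ZMod n} (h : x + 1 = y) :
    (y - v).val = (x - v).val + 1 ∨ (x - v).val + 1 = n ∧ (y - v).val = 0 := by
  rw [← h, add_sub_right_comm]
  exact ZMod.val_add_one_cases _

section S2

variable [NeZero n] {v a₁ a₂ b₁ b₂ : ZMod n}

lemma CWList.s2_val_sub (h : CWList n [v, b₁, a₁, a₂, b₂]) :
    0 < (b₁ - v).val ∧ (b₁ - v).val < (a₁ - v).val ∧ (a₁ - v).val < (a₂ - v).val ∧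
      (a₂ - v).val < (b₂ - v).val ∧ (b₂ - v).val < n := by
  have h' : [0, (b₁ - v).val, (a₁ - v).val, (a₂ - v).val, (b₂ - v).val].IsChain (· < ·) := h
  simp only [List.isChain_cons_cons, List.isChain_singleton, and_true] at h'
  exact ⟨h'.1, h'.2.1, h'.2.2.1, h'.2.2.2, (b₂ - v).val_lt⟩

lemma CWList.s2_apex_not_adjacent (h : CWList n [v, b₁, a₁, a₂, b₂]) :
    ∀ a ∈ ({a₁, a₂} : Finset (ZMod n)), v + 1 ≠ a ∧ a + 1 ≠ v := by
  have := h.s2_val_sub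
  simp only [mem_insert, mem_singleton, forall_eq_or_imp, forall_eq]
  refine ⟨⟨fun h' => ?_, fun h' => ?_⟩, fun h' => ?_, fun h' => ?_⟩ <;>
    rcases val_sub_of_add_one_eq (v := v) h' with h' | h' <;> simp only [sub_self, ZMod.val_zero] at h' <;> omega

lemma CWList.s2_base_not_adjacent (h : CWList n [v, b₁, a₁, a₂, b₂]) :
    b₁ ≠ v ∧ b₂ ≠ v ∧ b₁ ≠ b₂ ∧ b₁ + 1 ≠ b₂ ∧ b₂ + 1 ≠ b₁ := by
  have := h.s2_val_sub
  refine ⟨fun h' => ?_, fun h' => ?_, fun h' => ?_, fun h' => ?_, fun h' => ?_⟩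
  · simp [h'] at this
  · simp [h'] at this
  · rw [h'] at this; omega
  all_goals rcases val_sub_of_add_one_eq (v := v) h' with h' | h' <;> omega

end S2

def IsSideTriple (L : Set (ZMod n)) (e : Finset (ZMod n)) : Prop :=
  ∃ x y, e = {x, y, y + 1} ∧ y ∉ L ∧ y + 1 ∉ L ∧ (x ∈ L ∨ x = y + 2)

namespace IsSideTriple

variable {L : Set (ZMod n)} {v a₁ a₂ b₁ b₂ : ZMod n}

lemma mem_of_not_adjacent (h : IsSideTriple L {v, a₁, a₂})
    (ha : ∀ a ∈ ({a₁, a₂} : Finset (ZMod n)), v + 1 ≠ a ∧ a + 1 ≠ v) : v ∈ L := by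
  obtain ⟨x, y, he, hy, -, hx⟩ := h
  have hv : v ∈ ({x, y, y + 1} : Finset (ZMod n)) := he ▸ by simp
  have hy : y ∈ ({v, a₁, a₂} : Finset (ZMod n)) := he ▸ by simp
  have hy₁ : y + 1 ∈ ({v, a₁, a₂} : Finset (ZMod n)) := he ▸ by simp
  simp only [mem_insert, mem_singleton, forall_eq_or_imp, forall_eq] at hv hy hy₁ ha
  grind

lemma adjacent_of_mem (h : IsSideTriple L {v, b₁, b₂}) (hv : v ∈ L) (h₁ : b₁ ≠ v) (h₂ : b₂ ≠ v)
    (h₁₂ : b₁ ≠ b₂) : b₁ + 1 = b₂ ∨ b₂ + 1 = b₁ := by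
  obtain ⟨x, y, he, hy, hy₁, -⟩ := h
  have hv : v ∈ ({x, y, y + 1} : Finset (ZMod n)) := he ▸ by simp
  have hb₁ : b₁ ∈ ({x, y, y + 1} : Finset (ZMod n)) := he ▸ by simp
  have hb₂ : b₂ ∈ ({x, y, y + 1} : Finset (ZMod n)) := he ▸ by simp
  simp only [mem_insert, mem_singleton] at hv hb₁ hb₂
  grind

end IsSideTriple

theorem not_hasS2_of_forall_isSideTriple [NeZero n] {L : Set (ZMod n)}
    {H : Finset (Finset (ZMod n))} (hH : ∀ e ∈ H, IsSideTriple L e) : ¬ HasS2 n H := by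
  rintro ⟨v, a₁, a₂, b₁, b₂, hcw, hA, hB⟩
  obtain ⟨hb₁, hb₂, hb, hb₁₂, hb₂₁⟩ := hcw.s2_base_not_adjacent
  have hv : v ∈ L := (hH _ hA).mem_of_not_adjacent hcw.s2_apex_not_adjacent
  rcases (hH _ hB).adjacent_of_mem hv hb₁ hb₂ hb with h | h
  exacts [hb₁₂ h, hb₂₁ h]

def sideIndex (n t : ℕ) : Finset (ℕ × ℕ) :=
  range t ×ˢ Ico t (n - 1) ∪ (Ico t (n - 2)).image fun y => (y + 2, y)

def sideTriple (n x y : ℕ) : Finset (ZMod n) :=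
  {(x : ZMod n), (y : ZMod n), (y : ZMod n) + 1}

def sideFamily (n t : ℕ) : Finset (Finset (ZMod n)) :=
  (sideIndex n t).image fun p => sideTriple n p.1 p.2

section SideFamily

variable {t : ℕ}

lemma mem_sideIndex {p : ℕ × ℕ} :
    p ∈ sideIndex n t ↔
      p.1 < t ∧ t ≤ p.2 ∧ p.2 + 1 < n ∨ p.1 = p.2 + 2 ∧ t ≤ p.2 ∧ p.2 + 2 < n := by
  obtain ⟨x, y⟩ := p
  simp only [sideIndex, mem_union, mem_product, mem_range, mem_Ico, mem_image, Prod.mk.injEq]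
  constructor
  · rintro (h | ⟨y, h, rfl, rfl⟩) <;> omega
  · rintro (h | ⟨rfl, h⟩)
    exacts [.inl (by omega), .inr ⟨y, by omega, rfl, rfl⟩]

lemma card_sideIndex : #(sideIndex n t) = t * (n - 1 - t) + (n - 2 - t) := by
  rw [sideIndex, card_union_of_disjoint, card_product, card_range, Nat.card_Ico,
    card_image_of_injective _ fun a b h => (Prod.ext_iff.1 h).2, Nat.card_Ico]
  rw [disjoint_left]
  rintro ⟨x, y⟩ h h'
  simp only [mem_product, mem_range, mem_Ico, mem_image, Prod.mk.injEq] at h h'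
  omega

lemma natCast_mem_sideTriple {k x y : ℕ} (hk : k < n) (hx : x < n) (hy : y + 1 < n) :
    (k : ZMod n) ∈ sideTriple n x y ↔ k = x ∨ k = y ∨ k = y + 1 := by
  rw [sideTriple, ← Nat.cast_succ]
  simp only [mem_insert, mem_singleton, natCast_eq_natCast_iff_of_lt hk hx,
    natCast_eq_natCast_iff_of_lt hk (by omega : y < n), natCast_eq_natCast_iff_of_lt hk hy]

lemma card_sideTriple {x y : ℕ} (hx : x < n) (hy : y + 1 < n) (hxy : x ≠ y) (hxy₁ : x ≠ y + 1) :
    #(sideTriple n x y) = 3 := by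
  rw [sideTriple, ← Nat.cast_succ]
  refine card_eq_three.2 ⟨_, _, _, ?_, ?_, ?_, rfl⟩ <;>
    rw [Ne, natCast_eq_natCast_iff_of_lt (by omega) (by omega)] <;> omega

lemma injOn_sideTriple :
    Set.InjOn (fun p : ℕ × ℕ => sideTriple n p.1 p.2) (sideIndex n t) := by
  rintro ⟨x, y⟩ hp ⟨x', y'⟩ hq (he : sideTriple n x y = sideTriple n x' y')
  rw [mem_coe, mem_sideIndex] at hp hq
  have hmem : ∀ k < n, k = x ∨ k = y ∨ k = y + 1 → k = x' ∨ k = y' ∨ k = y' + 1 := by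
    intro k hk h
    rwa [← natCast_mem_sideTriple hk (by omega) (by omega), ← he,
      natCast_mem_sideTriple hk (by omega) (by omega)]
  have := hmem x (by omega) (by omega)
  have := hmem y (by omega) (by omega)
  have := hmem (y + 1) (by omega) (by omega)
  simp only [Prod.mk.injEq]
  omega

lemma card_sideFamily : #(sideFamily n t) = t * (n - 1 - t) + (n - 2 - t) := by
  rw [sideFamily, card_image_of_injOn injOn_sideTriple, card_sideIndex]

lemma isCgh_sideFamily : IsCgh n (sideFamily n t) := by
  simp only [IsCgh, sideFamily, forall_mem_image, Prod.forall, mem_sideIndex]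
  intro x y h
  exact card_sideTriple (by omega) (by omega) (by omega) (by omega)

lemma isSideTriple_of_mem_sideFamily {e : Finset (ZMod n)} (he : e ∈ sideFamily n t) :
    IsSideTriple {u | u.val < t} e := by
  obtain ⟨⟨x, y⟩, hp, rfl⟩ := mem_image.1 he
  simp only [mem_sideIndex] at hp
  have hval : ∀ k < n, (k : ZMod n) ∈ {u : ZMod n | u.val < t} ↔ k < t := fun k hk => by
    rw [Set.mem_ofPred_eq, ZMod.val_natCast_of_lt hk]
  refine ⟨x, y, rfl, ?_, ?_, ?_⟩
  · rw [hval y (by omega)]; omega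
  · rw [← Nat.cast_succ, hval _ (by omega)]; omega
  · rcases hp with h | ⟨rfl, -⟩
    · exact .inl ((hval x (by omega)).2 h.1)
    · exact .inr (by push_cast; ring)

theorem not_hasS2_sideFamily : ¬ HasS2 n (sideFamily n t) := by
  intro hS
  have : NeZero n := by
    obtain ⟨_, _, _, _, _, _, hA, _⟩ := hS
    obtain ⟨_, hp, _⟩ := mem_image.1 hA
    exact ⟨by rw [mem_sideIndex] at hp; omega⟩
  exact not_hasS2_of_forall_isSideTriple (fun e => isSideTriple_of_mem_sideFamily) hS

end SideFamily

lemma card_sideFamily_half (n : ℕ) : #(sideFamily n ((n - 2) / 2)) = n ^ 2 / 4 - 1 := by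
  rw [card_sideFamily]
  obtain ⟨m, rfl | rfl⟩ := Nat.even_or_odd' n <;> rcases m with _ | k
  · rfl
  · rw [show (2 * (k + 1) - 2) / 2 = k by omega, show 2 * (k + 1) - 1 - k = k + 1 by omega,
      show 2 * (k + 1) - 2 - k = k by omega]
    ring_nf; omega
  · rfl
  · rw [show (2 * (k + 1) + 1 - 2) / 2 = k by omega, show 2 * (k + 1) + 1 - 1 - k = k + 2 by omega,
      show 2 * (k + 1) + 1 - 2 - k = k + 1 by omega]
    ring_nf; omega

theorem ex_S2_lower_general (n : ℕ) :
    ∃ H : Finset (Finset (ZMod n)), IsCgh n H ∧ ¬ HasS2 n H ∧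
      n ^ 2 / 4 - 1 ≤ H.card :=
  ⟨sideFamily n ((n - 2) / 2), isCgh_sideFamily, not_hasS2_sideFamily,
    (card_sideFamily_half n).ge⟩

theorem ex_S2_lower (n : ℕ) (hn : 5 ≤ n) :
    ∃ H : Finset (Finset (ZMod n)), IsCgh n H ∧ ¬ HasS2 n H ∧
      n ^ 2 / 4 - 1 ≤ H.card :=
  ex_S2_lower_general n
end

section
/- For every ε > 0 there exists N such that for all n ≥ N, every D_2-free cgh on Ω_n has at most (1/4 − 1/936 + ε)·n² triples; in particular, ex_circ(n, D_2) ≤ 0.499·C(n,2) for all sufficiently large n. -/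
/-- `H` contains a copy of the configuration `D₂`: two distinct triples sharing
exactly the pair `{x, y}`, with the third vertices `c ≠ d` lying in the same
open arc of `Ω_n` determined by `x` and `y`. -/
def HasD2 (n : ℕ) (H : Finset (Finset (ZMod n))) : Prop :=
  ∃ x y c d : ZMod n, c ≠ d ∧
    ((CWList n [x, c, y] ∧ CWList n [x, d, y]) ∨
     (CWList n [y, c, x] ∧ CWList n [y, d, x])) ∧
    ({x, y, c} : Finset (ZMod n)) ∈ H ∧ ({x, y, d} : Finset (ZMod n)) ∈ H


/-!
A side of a pair `{x, y}` is encoded as the clockwise arc from `x` to `y`, i.e. the ordered pair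
`(x, y)`. A triple uses the three arcs joining two of its vertices that contain the third, and a
`D₂`-free cgh uses every arc at most once. Give an arc of length `ℓ` the weight
`(ℓ - n / 3 - 1)⁺`. The arcs of a triple have total length `2 n`, so each triple carries weight at
least `n - 3`, while all `n ^ 2` arcs together carry at most `2 n ^ 3 / 9`. Hence
`9 |H| (n - 3) ≤ 2 n ^ 3`, so `|H| ≤ 0.24 n ^ 2` once `n ≥ 100`.
-/

open Finset

namespace ZMod

variable {n : ℕ} [NeZero n]

theorem val_sub_comm {x y : ZMod n} (h : x ≠ y) : (x - y).val = n - (y - x).val := by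
  rw [← neg_sub, neg_val, if_neg (sub_ne_zero.2 h.symm)]

theorem val_add_val_add_val_eq {x y z : ZMod n} (h : x + y + z = 0) (hx : x ≠ 0) (hy : y ≠ 0)
    (hz : z ≠ 0) : x.val + y.val + z.val = n ∨ x.val + y.val + z.val = 2 * n := by
  obtain ⟨k, hk⟩ : n ∣ x.val + y.val + z.val := by
    rw [← natCast_eq_zero_iff]
    push_cast [natCast_zmod_val]
    exact h
  have := val_pos.2 hx; have := val_pos.2 hy; have := val_pos.2 hz
  have := val_lt x; have := val_lt y; have := val_lt z
  have : k < 3 := by nlinarith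
  interval_cases k <;> omega

end ZMod

section

variable {n : ℕ}

theorem cwList_triple_iff (x c y : ZMod n) :
    CWList n [x, c, y] ↔ 0 < (c - x).val ∧ (c - x).val < (y - x).val := by
  change List.IsChain _ [0, (c - x).val, (y - x).val] ↔ _
  simp only [List.isChain_cons_cons, List.isChain_singleton, and_true]

theorem eq_of_cwList_triple {e : Finset (ZMod n)} (he : e.card = 3) {x y z : ZMod n}
    (hx : x ∈ e) (hy : y ∈ e) (hz : z ∈ e) (hxzy : CWList n [x, z, y]) : e = {x, y, z} := by
  rw [cwList_triple_iff] at hxzy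
  have hzx : z ≠ x := by rintro rfl; simp at hxzy
  have hzy : z ≠ y := by rintro rfl; omega
  have hxy : x ≠ y := by rintro rfl; simp at hxzy
  refine (eq_of_subset_of_card_le ?_ ?_).symm
  · simp [insert_subset_iff, hx, hy, hz]
  · rw [he, card_eq_three.2 ⟨x, y, z, hxy, hzx.symm, hzy.symm, rfl⟩]

theorem exists_cyclic_order [NeZero n] {e : Finset (ZMod n)} (he : e.card = 3) :
    ∃ a b c : ZMod n, e = {a, b, c} ∧ a ≠ b ∧ b ≠ c ∧ c ≠ a ∧
      (b - a).val + (c - b).val + (a - c).val = n := by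
  obtain ⟨a, b, c, hab, hac, hbc, rfl⟩ := card_eq_three.1 he
  rcases ZMod.val_add_val_add_val_eq (by ring : (b - a) + (c - b) + (a - c) = 0)
    (sub_ne_zero.2 hab.symm) (sub_ne_zero.2 hbc.symm) (sub_ne_zero.2 hac) with h | h
  · exact ⟨a, b, c, rfl, hab, hbc, hac.symm, h⟩
  · -- Reversing the orientation turns gaps summing to `2 n` into gaps summing to `3 n - 2 n`.
    refine ⟨a, c, b, by rw [pair_comm], hac, hbc.symm, hab.symm, ?_⟩
    rw [ZMod.val_sub_comm hac.symm, ZMod.val_sub_comm hbc, ZMod.val_sub_comm hab]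
    have := ZMod.val_lt (b - a); have := ZMod.val_lt (c - b); have := ZMod.val_lt (a - c)
    omega

noncomputable def usedArcs (n : ℕ) (e : Finset (ZMod n)) : Finset (ZMod n × ZMod n) :=
  open Classical in (e ×ˢ e).filter fun p => ∃ z ∈ e, CWList n [p.1, z, p.2]

theorem mem_usedArcs {e : Finset (ZMod n)} {x y : ZMod n} :
    (x, y) ∈ usedArcs n e ↔ x ∈ e ∧ y ∈ e ∧ ∃ z ∈ e, CWList n [x, z, y] := by
  simp [usedArcs, and_assoc]

def arcWeight (n ℓ : ℕ) : ℕ := ℓ - (n / 3 + 1)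

theorem le_sum_arcWeight_usedArcs [NeZero n] {e : Finset (ZMod n)} (he : e.card = 3) :
    n - 3 ≤ ∑ p ∈ usedArcs n e, arcWeight n (p.2 - p.1).val := by
  obtain ⟨a, b, c, rfl, hab, hbc, hca, hsum⟩ := exists_cyclic_order he
  have hab_pos := ZMod.val_pos.2 (sub_ne_zero.2 hab.symm)
  have hbc_pos := ZMod.val_pos.2 (sub_ne_zero.2 hbc.symm)
  have hca_pos := ZMod.val_pos.2 (sub_ne_zero.2 hca.symm)
  have hac_val := ZMod.val_sub_comm hca
  have hba_val := ZMod.val_sub_comm hab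
  have hcb_val := ZMod.val_sub_comm hbc
  have hsub : {(a, c), (b, a), (c, b)} ⊆ usedArcs n {a, b, c} := by
    simp only [insert_subset_iff, singleton_subset_iff, mem_usedArcs, cwList_triple_iff]
    refine ⟨⟨by simp, by simp, b, by simp, ?_⟩, ⟨by simp, by simp, c, by simp, ?_⟩,
      ⟨by simp, by simp, a, by simp, ?_⟩⟩ <;> omega
  calc n - 3 ≤ arcWeight n (c - a).val + arcWeight n (a - b).val + arcWeight n (b - c).val := by
        simp only [arcWeight]; omega
    _ = ∑ p ∈ {(a, c), (b, a), (c, b)}, arcWeight n (p.2 - p.1).val := by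
        rw [sum_insert (by simp [hab, hca.symm]), sum_insert (by simp [hbc]), sum_singleton,
          add_assoc]
    _ ≤ _ := sum_le_sum_of_subset hsub

theorem pairwiseDisjoint_usedArcs {H : Finset (Finset (ZMod n))} (hH : IsCgh n H)
    (hD2 : ¬ HasD2 n H) : (H : Set (Finset (ZMod n))).PairwiseDisjoint (usedArcs n) := by
  intro e he f hf hef
  refine disjoint_left.2 fun ⟨x, y⟩ hpe hpf => ?_
  obtain ⟨hxe, hye, z, hze, hz⟩ := mem_usedArcs.1 hpe
  obtain ⟨hxf, hyf, w, hwf, hw⟩ := mem_usedArcs.1 hpf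
  have he' := eq_of_cwList_triple (hH e he) hxe hye hze hz
  have hf' := eq_of_cwList_triple (hH f hf) hxf hyf hwf hw
  by_cases hzw : z = w
  · exact hef (by rw [he', hf', hzw])
  · exact hD2 ⟨x, y, z, w, hzw, Or.inl ⟨hz, hw⟩, he' ▸ he, hf' ▸ hf⟩

theorem sum_val_le_sum_range [NeZero n] (f : ℕ → ℕ) :
    ∑ y : ZMod n, f y.val ≤ ∑ ℓ ∈ range n, f ℓ := by
  rw [← sum_image (g := ZMod.val) fun x _ y _ h => ZMod.val_injective n h]
  exact sum_le_sum_of_subset fun ℓ hℓ => by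
    obtain ⟨y, -, rfl⟩ := mem_image.1 hℓ
    exact mem_range.2 (ZMod.val_lt y)

theorem sum_val_sub_le [NeZero n] (f : ℕ → ℕ) :
    ∑ p : ZMod n × ZMod n, f (p.2 - p.1).val ≤ n * ∑ ℓ ∈ range n, f ℓ := by
  rw [Fintype.sum_prod_type]
  calc ∑ x : ZMod n, ∑ y : ZMod n, f (y - x).val
      = ∑ _x : ZMod n, ∑ y : ZMod n, f y.val := by
        refine sum_congr rfl fun x _ => ?_
        exact Fintype.sum_equiv (Equiv.subRight x) _ _ fun _ => rfl
    _ ≤ ∑ _x : ZMod n, ∑ ℓ ∈ range n, f ℓ := sum_le_sum fun _ _ => sum_val_le_sum_range f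
    _ = n * ∑ ℓ ∈ range n, f ℓ := by simp

theorem two_mul_sum_range_tsub_le (a : ℕ) : ∀ m : ℕ, 2 * ∑ ℓ ∈ range m, (ℓ - a) ≤ (m - a) ^ 2
  | 0 => by simp
  | m + 1 => by
    have ih := two_mul_sum_range_tsub_le a m
    rw [sum_range_succ, mul_add]
    rcases le_or_gt a m with h | h
    · rw [show m + 1 - a = m - a + 1 by omega]
      nlinarith
    · simp_all [Nat.sub_eq_zero_of_le h.le]

theorem nine_mul_sum_arcWeight_le : 9 * ∑ ℓ ∈ range n, arcWeight n ℓ ≤ 2 * n ^ 2 := by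
  have hsum := two_mul_sum_range_tsub_le (n / 3 + 1) n
  have h3 : 3 * (n - (n / 3 + 1)) ≤ 2 * n := by omega
  have := Nat.pow_le_pow_left h3 2
  simp only [arcWeight]
  nlinarith

theorem nine_mul_card_mul_le [NeZero n] {H : Finset (Finset (ZMod n))} (hH : IsCgh n H)
    (hD2 : ¬ HasD2 n H) : 9 * (H.card * (n - 3)) ≤ 2 * n ^ 3 := by
  have hcount : H.card * (n - 3) ≤ n * ∑ ℓ ∈ range n, arcWeight n ℓ :=
    calc H.card * (n - 3) ≤ ∑ e ∈ H, ∑ p ∈ usedArcs n e, arcWeight n (p.2 - p.1).val := by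
          simpa using card_nsmul_le_sum H _ _ fun e he => le_sum_arcWeight_usedArcs (hH e he)
      _ = ∑ p ∈ H.biUnion (usedArcs n), arcWeight n (p.2 - p.1).val :=
          (sum_biUnion (pairwiseDisjoint_usedArcs hH hD2)).symm
      _ ≤ ∑ p : ZMod n × ZMod n, arcWeight n (p.2 - p.1).val :=
          sum_le_sum_of_subset (subset_univ _)
      _ ≤ n * ∑ ℓ ∈ range n, arcWeight n ℓ := sum_val_sub_le _
  have := nine_mul_sum_arcWeight_le (n := n)
  nlinarith

theorem card_le_of_not_hasD2 (hn : 100 ≤ n) {H : Finset (Finset (ZMod n))} (hH : IsCgh n H)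
    (hD2 : ¬ HasD2 n H) : (H.card : ℝ) ≤ 0.24 * n ^ 2 := by
  have : NeZero n := ⟨by omega⟩
  have h := nine_mul_card_mul_le hH hD2
  have hn3 : 3 ≤ n := by omega
  have hR : (100 : ℝ) ≤ n := by exact_mod_cast hn
  have hcast : 9 * ((H.card : ℝ) * (n - 3)) ≤ 2 * n ^ 3 := by exact_mod_cast h
  nlinarith [(H.card.cast_nonneg : (0 : ℝ) ≤ H.card)]

end

theorem ex_D2_upper :
    (∀ ε : ℝ, 0 < ε → ∃ N : ℕ, ∀ n : ℕ, N ≤ n →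
      ∀ H : Finset (Finset (ZMod n)), IsCgh n H → ¬ HasD2 n H →
        (H.card : ℝ) ≤ (1 / 4 - 1 / 936 + ε) * n ^ 2) ∧
    (∃ N : ℕ, ∀ n : ℕ, N ≤ n →
      ∀ H : Finset (Finset (ZMod n)), IsCgh n H → ¬ HasD2 n H →
        (H.card : ℝ) ≤ 0.499 * (n.choose 2)) := by
  refine ⟨fun ε hε => ⟨100, fun n hn H hH hD2 => ?_⟩, ⟨100, fun n hn H hH hD2 => ?_⟩⟩
  · calc (H.card : ℝ) ≤ 0.24 * n ^ 2 := card_le_of_not_hasD2 hn hH hD2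
      _ ≤ (1 / 4 - 1 / 936 + ε) * n ^ 2 := by gcongr; linarith
  · have hR : (100 : ℝ) ≤ n := by exact_mod_cast hn
    calc (H.card : ℝ) ≤ 0.24 * n ^ 2 := card_le_of_not_hasD2 hn hH hD2
      _ ≤ 0.499 * (n.choose 2) := by rw [Nat.cast_choose_two]; nlinarith
end

section
/- There exists a constant C > 0 such that for every integer n ≥ 3 there is a D_2-free cgh on Ω_n with at least (8/21)·C(n,2) − C·n triples; that is, ex_circ(n, D_2) ≥ (8/21)·C(n,2) + O(n). -/
/-! For `5k < n`, take every triangle `{a, a + i, a + (k + 2i)}` with `1 ≤ i ≤ k`; its cyclic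
gaps are `i`, `k + i` and `n - k - 2i`. Orient a side `xy` so that the third vertex lies on the
clockwise arc from `x` to `y`. That arc has length `k + 2i ∈ [k + 2, 3k]`, `n - i ∈ [n - k, n - 1]`
or `n - k - i ∈ [n - 2k, n - k - 1]`; as these ranges are disjoint, the length of the arc
determines `i` and the position of the third vertex, so no two triangles form a `D₂`. With
`k = ⌊(n - 1)/5⌋` there are `nk ≈ n²/5 ≥ (8/21) C(n, 2)` triangles. -/

lemma cwList_three_iff_s12 {n : ℕ} (x c y : ZMod n) :
    CWList n [x, c, y] ↔ 0 < (c - x).val ∧ (c - x).val < (y - x).val := by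
  change List.IsChain _ _ ↔ _
  simp only [List.map_cons, List.map_nil, List.isChain_cons_cons, List.isChain_singleton,
    and_true]

lemma not_hasD2_of_apex_unique {n : ℕ} {H : Finset (Finset (ZMod n))}
    (h : ∀ x y c d, {x, y, c} ∈ H → {x, y, d} ∈ H →
      CWList n [x, c, y] → CWList n [x, d, y] → c = d) :
    ¬ HasD2 n H := by
  rintro ⟨x, y, c, d, hcd, ⟨hc, hd⟩ | ⟨hc, hd⟩, hxyc, hxyd⟩
  · exact hcd (h x y c d hxyc hxyd hc hd)
  · rw [Finset.insert_comm] at hxyc hxyd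
    exact hcd (h y x c d hxyc hxyd hc hd)

namespace ZMod

lemma val_add_natCast_sub_add_natCast {n : ℕ} (a : ZMod n) {p r : ℕ} (hp : p < n) (hr : r < n) :
    ((a + r) - (a + p)).val = if p ≤ r then r - p else n + r - p := by
  split_ifs with h
  · rw [add_sub_add_left_eq_sub, ← Nat.cast_sub h, val_natCast_of_lt (by omega)]
  · rw [add_sub_add_left_eq_sub, show (r : ZMod n) - p = ((n + r - p : ℕ) : ZMod n) by
      rw [Nat.cast_sub (by omega), Nat.cast_add, natCast_self, zero_add],
      val_natCast_of_lt (by omega)]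

lemma eq_of_val_sub_eq {n : ℕ} [NeZero n] {x c d : ZMod n} (h : (c - x).val = (d - x).val) :
    c = d :=
  sub_left_injective (val_injective n h)

end ZMod

variable {n : ℕ}

def triangle (k i : ℕ) (a : ZMod n) : Finset (ZMod n) :=
  {a, a + (i : ZMod n), a + ((k + 2 * i : ℕ) : ZMod n)}

lemma exists_offset_of_mem_triangle {k i : ℕ} {a z : ZMod n} (hz : z ∈ triangle k i a) :
    ∃ p : ℕ, (p = 0 ∨ p = i ∨ p = k + 2 * i) ∧ z = a + p := by
  simp only [triangle, Finset.mem_insert, Finset.mem_singleton] at hz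
  rcases hz with rfl | rfl | rfl
  exacts [⟨0, by simp⟩, ⟨i, by simp⟩, ⟨k + 2 * i, by simp⟩]

lemma apex_of_subset_triangle [NeZero n] {k i : ℕ} (hn : 5 * k < n) (hi : 1 ≤ i) (hik : i ≤ k)
    {a x y c : ZMod n} (hs : {x, y, c} ⊆ triangle k i a) (hcx : 0 < (c - x).val)
    (hyc : (c - x).val < (y - x).val) :
    (x = a ∧ (c - x).val = i ∧ (y - x).val = k + 2 * i) ∨
    ((c - x).val = k + i ∧ (y - x).val = n - i) ∨
    ((c - x).val = n - (k + 2 * i) ∧ (y - x).val = n - (k + i)) := by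
  obtain ⟨p, hp, rfl⟩ := exists_offset_of_mem_triangle (hs (by simp : x ∈ _))
  obtain ⟨q, hq, rfl⟩ := exists_offset_of_mem_triangle (hs (by simp : y ∈ _))
  obtain ⟨r, hr, rfl⟩ := exists_offset_of_mem_triangle (hs (by simp : c ∈ _))
  rw [ZMod.val_add_natCast_sub_add_natCast a (p := p) (r := r) (by omega) (by omega),
    ZMod.val_add_natCast_sub_add_natCast a (p := p) (r := q) (by omega) (by omega)] at *
  rcases hp with rfl | rfl | rfl
  · left; refine ⟨by simp, ?_⟩; split_ifs at * <;> omega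
  all_goals right; split_ifs at * <;> omega

lemma card_triangle {k i : ℕ} (hi : 1 ≤ i) (hn : k + 2 * i < n) (a : ZMod n) :
    (triangle k i a).card = 3 := by
  have hne : ∀ p r : ℕ, p < r → r < n → a + (p : ZMod n) ≠ a + r := fun p r hpr hr h => by
    have := ZMod.val_add_natCast_sub_add_natCast a (p := p) (r := r) (by omega) hr
    rw [h, sub_self, ZMod.val_zero, if_pos hpr.le] at this
    omega
  refine Finset.card_eq_three.2 ⟨_, _, _, ?_, ?_, hne _ _ (by omega) hn, rfl⟩
  · simpa using hne 0 i (by omega) (by omega)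
  · simpa using hne 0 (k + 2 * i) (by omega) hn

variable (n) in
def triangleFamily [NeZero n] (k : ℕ) : Finset (Finset (ZMod n)) :=
  (Finset.univ ×ˢ Finset.Icc 1 k).image fun p => triangle k p.2 p.1

section triangleFamily

variable [NeZero n] {k : ℕ}

lemma mem_triangleFamily {e : Finset (ZMod n)} :
    e ∈ triangleFamily n k ↔ ∃ a, ∃ i, (1 ≤ i ∧ i ≤ k) ∧ triangle k i a = e := by
  simp [triangleFamily]

lemma isCgh_triangleFamily (hn : 3 * k < n) : IsCgh n (triangleFamily n k) := by
  intro e he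
  obtain ⟨a, i, hi, rfl⟩ := mem_triangleFamily.1 he
  exact card_triangle hi.1 (by omega) a

lemma not_hasD2_triangleFamily (hn : 5 * k < n) : ¬ HasD2 n (triangleFamily n k) := by
  apply not_hasD2_of_apex_unique
  intro x y c d hc hd hxcy hxdy
  rw [cwList_three_iff_s12] at hxcy hxdy
  obtain ⟨a, i, hi, hac⟩ := mem_triangleFamily.1 hc
  obtain ⟨b, j, hj, hbd⟩ := mem_triangleFamily.1 hd
  apply ZMod.eq_of_val_sub_eq (x := x)
  rcases apex_of_subset_triangle hn hi.1 hi.2 hac.ge hxcy.1 hxcy.2 with h | h | h <;>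
    rcases apex_of_subset_triangle hn hj.1 hj.2 hbd.ge hxdy.1 hxdy.2 with h' | h' | h' <;>
    omega

lemma card_triangleFamily (hn : 5 * k < n) : (triangleFamily n k).card = n * k := by
  rw [triangleFamily, Finset.card_image_of_injOn, Finset.card_product, Finset.card_univ,
    ZMod.card, Nat.card_Icc, Nat.add_sub_cancel]
  rintro ⟨a, i⟩ hai ⟨b, j⟩ hbj h
  simp only [Finset.coe_product, Set.mem_prod, Finset.mem_coe, Finset.mem_Icc] at hai hbj h
  have hval : ∀ m : ℕ, m < n → (a + (m : ZMod n) - a).val = m := fun m hm => by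
    rw [add_sub_cancel_left, ZMod.val_natCast_of_lt hm]
  have hs : {a, a + ((k + 2 * i : ℕ) : ZMod n), a + (i : ZMod n)} ⊆ triangle k j b := by
    rw [← h]
    simp [triangle, Finset.insert_subset_iff]
  rcases apex_of_subset_triangle hn hbj.2.1 hbj.2.2 hs (by rw [hval i (by omega)]; omega)
      (by rw [hval i (by omega), hval _ (by omega)]; omega) with
    ⟨hab, hij, -⟩ | ⟨hij, -⟩ | ⟨hij, -⟩ <;> rw [hval i (by omega)] at hij
  · exact Prod.ext hab (by omega)
  all_goals omega

end triangleFamily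

lemma eight_div_21_mul_choose_two_sub_le (n : ℕ) :
    (8 : ℝ) / 21 * n.choose 2 - n ≤ ((n * ((n - 1) / 5) : ℕ) : ℝ) := by
  have h5 : (n : ℝ) ≤ 5 * (((n - 1) / 5 : ℕ) : ℝ) + 5 := by
    exact_mod_cast (by omega : n ≤ 5 * ((n - 1) / 5) + 5)
  rw [Nat.cast_choose_two, Nat.cast_mul]
  nlinarith [(Nat.cast_nonneg n : (0 : ℝ) ≤ n)]

theorem ex_D2_lower :
    ∃ C : ℝ, 0 < C ∧ ∀ n : ℕ, 3 ≤ n →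
      ∃ H : Finset (Finset (ZMod n)), IsCgh n H ∧ ¬ HasD2 n H ∧
        (8 : ℝ) / 21 * (n.choose 2) - C * n ≤ (H.card : ℝ) := by
  refine ⟨1, one_pos, fun n hn => ?_⟩
  have : NeZero n := ⟨by omega⟩
  have hk : 5 * ((n - 1) / 5) < n := by omega
  refine ⟨triangleFamily n ((n - 1) / 5), isCgh_triangleFamily (by omega),
    not_hasD2_triangleFamily hk, ?_⟩
  rw [card_triangleFamily hk, one_mul]
  exact eight_div_21_mul_choose_two_sub_le n
end

section
/- Every S_1-free cgh H on Ω_n (n ≥ 3) contains a vertex u whose degree satisfies d_H(u) ≤ n²/8 + 3n/2. -/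
/-- `H` contains a copy of the configuration `S₁`: two triples sharing exactly
the vertex `v`, with the five vertices in clockwise cyclic order `v, a₁, a₂, b₁, b₂`. -/
def HasS1 (n : ℕ) (H : Finset (Finset (ZMod n))) : Prop :=
  ∃ v a₁ a₂ b₁ b₂ : ZMod n,
    CWList n [v, a₁, a₂, b₁, b₂] ∧
    ({v, a₁, a₂} : Finset (ZMod n)) ∈ H ∧ ({v, b₁, b₂} : Finset (ZMod n)) ∈ H

/-!
Take an edge `{0, a, g}`, `a < g`, whose far end `g` is as close to `0` (clockwise) as possible,
and compare the degrees of `0` and `g`. Applying S₁-freeness at `0`, at `g` and at the vertices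
between them shows that the edges at `0` avoiding `g` are `{0, z, y}` with `z < g < y`, and that
the edges at `g` avoiding `0` are `{g, z, y}` with `z < g`, where `y` lies on either side of `g`.
Grouped by `z`, these two families satisfy enough mutual exclusions to number at most `n² / 4`
together, and at most `n` edges contain both `0` and `g`, so `d(0) + d(g) ≤ n² / 4 + 2n`.
-/

open Finset

theorem card_add_card_le_of_forall_le {α : Type*} [PartialOrder α] [DecidableEq α]
    {s t u : Finset α} (hs : s ⊆ u) (ht : t ⊆ u) (h : ∀ a ∈ s, ∀ b ∈ t, a ≤ b) :
    #s + #t ≤ #u + 1 := by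
  rw [← card_union_add_card_inter]
  gcongr
  · exact union_subset hs ht
  · refine card_le_one.2 fun a ha b hb => ?_
    rw [mem_inter] at ha hb
    exact le_antisymm (h a ha.1 b hb.2) (h b hb.1 a ha.2)

theorem four_mul_pred_mul_max_add_le_sq {p t m : ℕ} (hp : 1 ≤ p) :
    4 * ((p - 1) * max m t + t * m + t) ≤ (p + t + m) ^ 2 := by
  obtain ⟨p, rfl⟩ := Nat.exists_eq_add_of_le hp
  rw [Nat.add_sub_cancel_left]
  rcases le_total t m with h | h
  · calc _ ≤ 4 * (1 + p + t) * m := by rw [max_eq_left h]; nlinarith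
      _ ≤ _ := four_mul_le_sq_add _ _
  · calc _ = 4 * t * (1 + p + m) := by rw [max_eq_right h]; ring
      _ ≤ (t + (1 + p + m)) ^ 2 := four_mul_le_sq_add _ _
      _ = _ := by ring

theorem sum_card_le_of_last_nonempty {g n P : ℕ} (α γ δ : ℕ → Finset ℕ)
    (hδ : ∀ z, δ z ⊆ Ioo z g) (hrow : ∀ z ∈ Ico 1 g, #(α z) + #(γ z) ≤ n - g)
    (hαδ : ∀ z ∈ Ico 1 g, ∀ y ∈ α z, ∀ y' ∈ δ z, False) (hP : P ∈ Ico 1 g)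
    (hPmax : ∀ z ∈ Ico 1 g, (δ z).Nonempty → z ≤ P)
    (hγP : ∀ z ∈ Ico 1 g, (γ z).Nonempty → P ≤ z) (hδP : ∀ z ∈ Ico 1 g, ∀ y ∈ δ z, P ≤ y) :
    ∑ z ∈ Ico 1 g, (#(α z) + #(γ z) + #(δ z)) ≤
      (P - 1) * max (n - g) (g - P) + ((g - P) * (n - g) + (g - P)) := by
  have hP' := mem_Ico.1 hP
  have hlow : ∀ z ∈ Ico 1 P, #(α z) + #(γ z) + #(δ z) ≤ max (n - g) (g - P) := by
    intro z hz
    rw [mem_Ico] at hz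
    have hz' : z ∈ Ico 1 g := mem_Ico.2 ⟨hz.1, by omega⟩
    have hγz : γ z = ∅ := not_nonempty_iff_eq_empty.1 fun h => by have := hγP z hz' h; omega
    rcases (α z).eq_empty_or_nonempty with hαz | ⟨y, hy⟩
    · have : #(δ z) ≤ g - P := by
        calc #(δ z) ≤ #(Ico P g) := card_le_card fun y hy =>
              mem_Ico.2 ⟨hδP z hz' y hy, (mem_Ioo.1 (hδ z hy)).2⟩
          _ = g - P := Nat.card_Ico _ _
      simp only [hαz, hγz, card_empty, zero_add]
      omega
    · have hδz : δ z = ∅ := eq_empty_of_forall_notMem fun y' hy' => hαδ z hz' y hy y' hy'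
      have := hrow z hz'
      simp only [hγz, hδz, card_empty, add_zero] at this ⊢
      omega
  have hhigh : ∑ z ∈ Ico P g, (#(α z) + #(γ z) + #(δ z)) ≤ (g - P) * (n - g) + (g - P) := by
    rw [sum_add_distrib]
    gcongr
    · refine (sum_le_card_nsmul _ _ _ fun z hz => hrow z ?_).trans_eq (by simp)
      simp only [mem_Ico] at hz ⊢
      omega
    · rw [sum_eq_single_of_mem P (by simp; omega) fun z hz hzP => ?_]
      · calc #(δ P) ≤ #(Ico P g) := card_le_card fun y hy =>
              mem_Ico.2 ⟨(mem_Ioo.1 (hδ P hy)).1.le, (mem_Ioo.1 (hδ P hy)).2⟩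
          _ = g - P := Nat.card_Ico _ _
      · rw [mem_Ico] at hz
        have := mt (hPmax z (mem_Ico.2 ⟨by omega, hz.2⟩)) (by omega)
        rwa [not_nonempty_iff_eq_empty, ← card_eq_zero] at this
  rw [← sum_Ico_consecutive _ hP'.1 hP'.2.le]
  exact add_le_add ((sum_le_card_nsmul _ _ _ hlow).trans_eq (by simp)) hhigh

theorem four_mul_sum_card_le_sq {g n : ℕ} (hgn : g < n) (α γ δ : ℕ → Finset ℕ)
    (hα : ∀ z, α z ⊆ Ioo g n) (hγ : ∀ z, γ z ⊆ Ioo g n) (hδ : ∀ z, δ z ⊆ Ioo z g)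
    (hαγ : ∀ z ∈ Ico 1 g, ∀ y ∈ α z, ∀ y' ∈ γ z, y ≤ y')
    (hαδ : ∀ z ∈ Ico 1 g, ∀ y ∈ α z, ∀ y' ∈ δ z, False)
    (hδγ : ∀ z ∈ Ico 1 g, ∀ z' ∈ Ico 1 g, ∀ y ∈ δ z, ∀ y' ∈ γ z', z ≤ z')
    (hδδ : ∀ z ∈ Ico 1 g, ∀ z' ∈ Ico 1 g, ∀ y ∈ δ z, ∀ y' ∈ δ z', z ≤ y') :
    4 * ∑ z ∈ Ico 1 g, (#(α z) + #(γ z) + #(δ z)) ≤ n ^ 2 := by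
  have hrow : ∀ z ∈ Ico 1 g, #(α z) + #(γ z) ≤ n - g := fun z hz =>
    (card_add_card_le_of_forall_le (hα z) (hγ z) (hαγ z hz)).trans (by simp; omega)
  by_cases hD : ∃ z ∈ Ico 1 g, (δ z).Nonempty
  · obtain ⟨P, hP, hPmax⟩ := exists_max_image ((Ico 1 g).filter fun z => (δ z).Nonempty) id
      (by simpa [filter_nonempty_iff] using hD)
    simp only [mem_filter, id, and_imp] at hP hPmax
    obtain ⟨hP, y₀, hy₀⟩ := hP
    have hsum := sum_card_le_of_last_nonempty α γ δ hδ hrow hαδ hP hPmax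
      (fun z hz ⟨y', hy'⟩ => hδγ P hP z hz y₀ hy₀ y' hy') (fun z hz => hδδ P hP z hz y₀ hy₀)
    have := four_mul_pred_mul_max_add_le_sq (t := g - P) (m := n - g) (mem_Ico.1 hP).1
    rw [show P + (g - P) + (n - g) = n by simp at hP; omega] at this
    omega
  · push Not at hD
    have hsum : ∑ z ∈ Ico 1 g, (#(α z) + #(γ z) + #(δ z)) ≤ (g - 1) * (n - g) := by
      refine (sum_le_card_nsmul _ _ (n - g) fun z hz => ?_).trans_eq (by simp)
      rw [hD z hz, card_empty, add_zero]
      exact hrow z hz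
    have := four_mul_le_sq_add g (n - g)
    rw [Nat.add_sub_cancel' hgn.le] at this
    nlinarith [Nat.sub_le g 1]

theorem card_filter_mem_and_mem_le {α : Type*} [Fintype α] [DecidableEq α]
    {H : Finset (Finset α)} (hH : ∀ e ∈ H, #e = 3) {u w : α} (huw : u ≠ w) :
    #(H.filter fun e => u ∈ e ∧ w ∈ e) ≤ Fintype.card α := by
  calc _ ≤ #((univ : Finset α).image fun x => {u, w, x}) := card_le_card fun e he => ?_
    _ ≤ Fintype.card α := card_image_le
  obtain ⟨heH, hu, hw⟩ := mem_filter.1 he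
  have hw' : w ∈ e.erase u := mem_erase.2 ⟨huw.symm, hw⟩
  obtain ⟨x, hx⟩ := card_eq_one.1 (show #((e.erase u).erase w) = 1 by
    rw [card_erase_of_mem hw', card_erase_of_mem hu, hH e heH])
  refine mem_image.2 ⟨x, mem_univ x, ?_⟩
  rw [← hx, insert_erase hw', insert_erase hu]

theorem card_filter_mem_eq_add {α : Type*} [DecidableEq α] (H : Finset (Finset α)) (u w : α) :
    #(H.filter fun e => u ∈ e) =
      #(H.filter fun e => u ∈ e ∧ w ∉ e) + #(H.filter fun e => u ∈ e ∧ w ∈ e) := by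
  rw [← card_filter_add_card_filter_not (s := H.filter fun e => u ∈ e) (fun e => w ∈ e),
    filter_filter, filter_filter, add_comm]

namespace CWList
variable {n : ℕ}

theorem five_iff {a b c d e : ZMod n} :
    CWList n [a, b, c, d, e] ↔ 0 < (b - a).val ∧ (b - a).val < (c - a).val ∧
      (c - a).val < (d - a).val ∧ (d - a).val < (e - a).val := by
  show List.IsChain _ [0, (b - a).val, (c - a).val, (d - a).val, (e - a).val] ↔ _
  simp only [List.isChain_cons_cons, List.isChain_singleton, and_true]

theorem of_lt {a b c d e : ℕ} (hab : a < b) (hbc : b < c) (hcd : c < d) (hde : d < e)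
    (hen : e < n) : CWList n [(a : ZMod n), b, c, d, e] := by
  have hdist : ∀ x, a ≤ x → x < n → ((x : ZMod n) - a).val = x - a := fun x hax hxn => by
    rw [← Nat.cast_sub hax, ZMod.val_cast_of_lt (by omega)]
  rw [five_iff, hdist b, hdist c, hdist d, hdist e] <;> omega

theorem rotate [NeZero n] {a b c d e : ZMod n} (h : CWList n [a, b, c, d, e]) :
    CWList n [b, c, d, e, a] := by
  obtain ⟨hb, hc, hd, he⟩ := five_iff.1 h
  have hdist : ∀ x : ZMod n, (b - a).val ≤ (x - a).val →
      (x - b).val = (x - a).val - (b - a).val :=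
    fun x hx => by rw [← ZMod.val_sub hx, sub_sub_sub_cancel_right]
  have hab : (a - b).val = n - (b - a).val := by
    rw [← neg_sub, ZMod.neg_val, if_neg fun h => by simp [h] at hb]
  have := (e - a).val_lt
  rw [five_iff, hdist c, hdist d, hdist e, hab] <;> omega

end CWList

section

variable {n : ℕ} {H : Finset (Finset (ZMod n))}

def pairLink (H : Finset (Finset (ZMod n))) (v : ZMod n) (z : ℕ) (s : Finset ℕ) : Finset ℕ :=
  s.filter fun y => {v, (z : ZMod n), (y : ZMod n)} ∈ H

theorem mem_pairLink {v : ZMod n} {z y : ℕ} {s : Finset ℕ} :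
    y ∈ pairLink H v z s ↔ y ∈ s ∧ {v, (z : ZMod n), (y : ZMod n)} ∈ H :=
  mem_filter

variable [NeZero n]

theorem exists_eq_triple_of_mem {e : Finset (ZMod n)} (he : #e = 3) {u : ℕ}
    (hu : (u : ZMod n) ∈ e) :
    ∃ x y : ℕ, x < y ∧ y < n ∧ x ≠ u ∧ y ≠ u ∧ e = {(u : ZMod n), (x : ZMod n), (y : ZMod n)} := by
  obtain ⟨p, q, hpq, hpq'⟩ := card_eq_two.1 (show #(e.erase u) = 2 by
    rw [card_erase_of_mem hu, he])
  have hval : ∀ x ∈ e.erase ↑u, x.val ≠ u := fun x hx h =>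
    ne_of_mem_erase hx (by rw [← h, ZMod.natCast_zmod_val])
  have hp := hval p (by simp [hpq'])
  have hq := hval q (by simp [hpq'])
  have heq : e = {(u : ZMod n), p, q} := by rw [← insert_erase hu, hpq']
  rcases lt_or_gt_of_ne fun h => hpq (ZMod.val_injective n h) with h | h
  · exact ⟨p.val, q.val, h, q.val_lt, hp, hq, by simp [heq]⟩
  · exact ⟨q.val, p.val, h, p.val_lt, hq, hp, by simp [heq, pair_comm]⟩

theorem exists_edge_with_min_far_end (hcgh : IsCgh n H) (h0 : ∃ e ∈ H, (0 : ZMod n) ∈ e) :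
    ∃ a g : ℕ, 0 < a ∧ a < g ∧ g < n ∧ {0, (a : ZMod n), (g : ZMod n)} ∈ H ∧
      ∀ x y : ℕ, 0 < x → x < y → y < n → {0, (x : ZMod n), (y : ZMod n)} ∈ H → g ≤ y := by
  have hex : ∃ g a : ℕ, 0 < a ∧ a < g ∧ g < n ∧ {0, (a : ZMod n), (g : ZMod n)} ∈ H := by
    obtain ⟨e, he, h0⟩ := h0
    obtain ⟨x, y, hxy, hyn, hx, -, rfl⟩ :=
      exists_eq_triple_of_mem (hcgh e he) (u := 0) (by simpa using h0)
    exact ⟨y, x, Nat.pos_of_ne_zero hx, hxy, hyn, by simpa using he⟩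
  classical
  obtain ⟨a, ha, hag, hgn, he⟩ := Nat.find_spec hex
  exact ⟨a, Nat.find hex, ha, hag, hgn, he,
    fun x y hx hxy hyn hH => Nat.find_min' hex ⟨x, hx, hxy, hyn, hH⟩⟩

variable {a g z z' y y' : ℕ}

theorem le_of_mem_pairLink_zero_of_mem_pairLink_outer (hfree : ¬ HasS1 n H) (hz : z ∈ Ico 1 g)
    (hy : y ∈ pairLink H 0 z (Ioo g n)) (hy' : y' ∈ pairLink H g z (Ioo g n)) : y ≤ y' := by
  simp only [mem_pairLink, mem_Ioo, mem_Ico] at hy hy' hz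
  by_contra! h
  have hcw := (CWList.of_lt (n := n) hz.1 hz.2 hy'.1.1 h hy.1.2).rotate
  rw [Nat.cast_zero] at hcw
  refine hfree ⟨_, _, _, _, _, hcw, ?_, ?_⟩
  · rw [insert_comm]; exact hy'.2
  · rw [pair_comm, insert_comm]; exact hy.2

theorem false_of_mem_pairLink_zero_of_mem_pairLink_inner (hfree : ¬ HasS1 n H)
    (hz : z ∈ Ico 1 g) (hy : y ∈ pairLink H 0 z (Ioo g n)) (hy' : y' ∈ pairLink H g z (Ioo z g)) :
    False := by
  simp only [mem_pairLink, mem_Ioo, mem_Ico] at hy hy' hz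
  have hcw := (CWList.of_lt (n := n) hz.1 hy'.1.1 hy'.1.2 hy.1.1 hy.1.2).rotate
  rw [Nat.cast_zero] at hcw
  refine hfree ⟨_, _, _, _, _, hcw, ?_, ?_⟩
  · rw [pair_comm, insert_comm]; exact hy'.2
  · rw [pair_comm, insert_comm]; exact hy.2

theorem le_of_mem_pairLink_inner_of_mem_pairLink_outer (hfree : ¬ HasS1 n H)
    (hy : y ∈ pairLink H g z (Ioo z g)) (hy' : y' ∈ pairLink H g z' (Ioo g n)) : z ≤ z' := by
  simp only [mem_pairLink, mem_Ioo] at hy hy'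
  by_contra! h
  have hcw := (CWList.of_lt (n := n) h hy.1.1 hy.1.2 hy'.1.1 hy'.1.2).rotate.rotate.rotate
  refine hfree ⟨_, _, _, _, _, hcw, ?_, hy.2⟩
  rw [pair_comm]; exact hy'.2

theorem le_of_mem_pairLink_inner_of_mem_pairLink_inner (hfree : ¬ HasS1 n H) (hgn : g < n)
    (hy : y ∈ pairLink H g z (Ioo z g)) (hy' : y' ∈ pairLink H g z' (Ioo z' g)) : z ≤ y' := by
  simp only [mem_pairLink, mem_Ioo] at hy hy'
  by_contra! h
  have hcw := (CWList.of_lt (n := n) hy'.1.1 h hy.1.1 hy.1.2 hgn).rotate.rotate.rotate.rotate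
  exact hfree ⟨_, _, _, _, _, hcw, hy'.2, hy.2⟩

theorem card_filter_mem_zero_not_mem_le (hcgh : IsCgh n H) (hfree : ¬ HasS1 n H) (ha : 0 < a)
    (hag : a < g) (he₁ : {0, (a : ZMod n), (g : ZMod n)} ∈ H)
    (hmin : ∀ x y : ℕ, 0 < x → x < y → y < n → {0, (x : ZMod n), (y : ZMod n)} ∈ H → g ≤ y) :
    #(H.filter fun e => 0 ∈ e ∧ (g : ZMod n) ∉ e) ≤ ∑ z ∈ Ico 1 g, #(pairLink H 0 z (Ioo g n)) :=
  calc _ ≤ #((Ico 1 g).biUnion fun z =>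
          (pairLink H 0 z (Ioo g n)).image
            fun y : ℕ => ({0, (z : ZMod n), (y : ZMod n)} : Finset (ZMod n))) := by
        refine card_le_card fun e he => ?_
        obtain ⟨heH, h0, hg⟩ := mem_filter.1 he
        obtain ⟨x, y, hxy, hyn, hx, -, rfl⟩ :=
          exists_eq_triple_of_mem (hcgh e heH) (u := 0) (by simpa using h0)
        rw [Nat.cast_zero] at heH hg
        have hgy : g < y := (hmin x y (by omega) hxy hyn heH).lt_of_ne (by rintro rfl; simp at hg)
        have hxg : x < g := by
          refine lt_of_le_of_ne (not_lt.1 fun hgx => hfree ?_) (by rintro rfl; simp at hg)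
          have hcw := CWList.of_lt (n := n) ha hag hgx hxy hyn
          rw [Nat.cast_zero] at hcw
          exact ⟨_, _, _, _, _, hcw, he₁, heH⟩
        simp only [mem_biUnion, mem_image, mem_pairLink, mem_Ioo, mem_Ico, Nat.cast_zero]
        exact ⟨x, ⟨by omega, hxg⟩, y, ⟨⟨hgy, hyn⟩, heH⟩, rfl⟩
    _ ≤ ∑ z ∈ Ico 1 g, #(pairLink H 0 z (Ioo g n)) :=
      card_biUnion_le.trans (sum_le_sum fun _ _ => card_image_le)

theorem card_filter_mem_not_mem_zero_le (hcgh : IsCgh n H) (hfree : ¬ HasS1 n H) (ha : 0 < a)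
    (hag : a < g) (he₁ : {0, (a : ZMod n), (g : ZMod n)} ∈ H) :
    #(H.filter fun e => (g : ZMod n) ∈ e ∧ 0 ∉ e) ≤
      ∑ z ∈ Ico 1 g, (#(pairLink H g z (Ioo g n)) + #(pairLink H g z (Ioo z g))) :=
  calc _ ≤ #((Ico 1 g).biUnion fun z =>
          (pairLink H g z (Ioo g n) ∪ pairLink H g z (Ioo z g)).image
            fun y : ℕ => ({(g : ZMod n), (z : ZMod n), (y : ZMod n)} : Finset (ZMod n))) := by
        refine card_le_card fun e he => ?_
        obtain ⟨heH, hg, h0⟩ := mem_filter.1 he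
        obtain ⟨x, y, hxy, hyn, hxg, hyg, rfl⟩ := exists_eq_triple_of_mem (hcgh e heH) hg
        have hx : 0 < x := Nat.pos_of_ne_zero (by rintro rfl; simp at h0)
        have hxg' : x < g := by
          refine lt_of_le_of_ne (not_lt.1 fun hgx => hfree ?_) hxg
          have hcw := (CWList.of_lt (n := n) ha hag hgx hxy hyn).rotate.rotate
          rw [Nat.cast_zero] at hcw
          refine ⟨_, _, _, _, _, hcw, heH, ?_⟩
          rw [insert_comm, pair_comm]; exact he₁
        simp only [mem_biUnion, mem_image, mem_union, mem_pairLink, mem_Ioo, mem_Ico]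
        refine ⟨x, ⟨hx, hxg'⟩, y, ?_, rfl⟩
        rcases lt_or_gt_of_ne hyg with h | h
        · exact Or.inr ⟨⟨hxy, h⟩, heH⟩
        · exact Or.inl ⟨⟨h, hyn⟩, heH⟩
    _ ≤ ∑ z ∈ Ico 1 g, (#(pairLink H g z (Ioo g n)) + #(pairLink H g z (Ioo z g))) :=
      card_biUnion_le.trans (sum_le_sum fun _ _ => card_image_le.trans (card_union_le _ _))

theorem four_mul_card_add_card_le (hcgh : IsCgh n H) (hfree : ¬ HasS1 n H) (ha : 0 < a)
    (hag : a < g) (hgn : g < n) (he₁ : {0, (a : ZMod n), (g : ZMod n)} ∈ H)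
    (hmin : ∀ x y : ℕ, 0 < x → x < y → y < n → {0, (x : ZMod n), (y : ZMod n)} ∈ H → g ≤ y) :
    4 * (#(H.filter fun e => 0 ∈ e ∧ (g : ZMod n) ∉ e) +
      #(H.filter fun e => (g : ZMod n) ∈ e ∧ 0 ∉ e)) ≤ n ^ 2 :=
  calc _ ≤ 4 * (∑ z ∈ Ico 1 g, #(pairLink H 0 z (Ioo g n)) +
          ∑ z ∈ Ico 1 g, (#(pairLink H g z (Ioo g n)) + #(pairLink H g z (Ioo z g)))) := by
        gcongr
        exacts [card_filter_mem_zero_not_mem_le hcgh hfree ha hag he₁ hmin,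
          card_filter_mem_not_mem_zero_le hcgh hfree ha hag he₁]
    _ = 4 * ∑ z ∈ Ico 1 g, (#(pairLink H 0 z (Ioo g n)) + #(pairLink H g z (Ioo g n)) +
          #(pairLink H g z (Ioo z g))) := by
        simp only [← sum_add_distrib, add_assoc]
    _ ≤ n ^ 2 := four_mul_sum_card_le_sq hgn _ _ _
        (fun _ => filter_subset _ _) (fun _ => filter_subset _ _) (fun _ => filter_subset _ _)
        (fun _ hz _ hy _ hy' => le_of_mem_pairLink_zero_of_mem_pairLink_outer hfree hz hy hy')
        (fun _ hz _ hy _ hy' => false_of_mem_pairLink_zero_of_mem_pairLink_inner hfree hz hy hy')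
        (fun _ _ _ _ _ hy _ hy' => le_of_mem_pairLink_inner_of_mem_pairLink_outer hfree hy hy')
        (fun _ _ _ _ _ hy _ hy' => le_of_mem_pairLink_inner_of_mem_pairLink_inner hfree hgn hy hy')

end

theorem S1_free_min_degree (n : ℕ) (hn : 3 ≤ n)
    (H : Finset (Finset (ZMod n))) (hcgh : IsCgh n H) (hfree : ¬ HasS1 n H) :
    ∃ u : ZMod n,
      ((H.filter fun e => u ∈ e).card : ℝ) ≤ n ^ 2 / 8 + 3 * n / 2 := by
  have : NeZero n := ⟨by omega⟩
  suffices h : ∃ u : ZMod n, 8 * #(H.filter fun e => u ∈ e) ≤ n ^ 2 + 8 * n by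
    obtain ⟨u, hu⟩ := h
    refine ⟨u, ?_⟩
    have : (8 * #(H.filter fun e => u ∈ e) : ℝ) ≤ n ^ 2 + 8 * n := by exact_mod_cast hu
    linarith [(n.cast_nonneg : (0 : ℝ) ≤ n)]
  by_cases h0 : ∃ e ∈ H, (0 : ZMod n) ∈ e
  swap
  · exact ⟨0, by simp [filter_false_of_mem (by simpa using h0)]⟩
  obtain ⟨a, g, ha, hag, hgn, he₁, hmin⟩ := exists_edge_with_min_far_end hcgh h0
  have hg0 : (g : ZMod n) ≠ 0 := by
    rw [Ne, ZMod.natCast_eq_zero_iff]; exact Nat.not_dvd_of_pos_of_lt (by omega) hgn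
  have hXY := four_mul_card_add_card_le hcgh hfree ha hag hgn he₁ hmin
  have hZ₀ := card_filter_mem_and_mem_le hcgh hg0.symm
  have hZg := card_filter_mem_and_mem_le hcgh hg0
  rw [ZMod.card] at hZ₀ hZg
  have hd₀ := card_filter_mem_eq_add H 0 (g : ZMod n)
  have hdg := card_filter_mem_eq_add H (g : ZMod n) 0
  rcases le_total #(H.filter fun e => 0 ∈ e) #(H.filter fun e => (g : ZMod n) ∈ e) with h | h
  exacts [⟨0, by omega⟩, ⟨g, by omega⟩]
end

section
/- Let n ≥ 6, let H be an M_2-free cgh on Ω_n, and let u and v be cyclically consecutive vertices of Ω_n (v = u+1). Then the common link graph G_{u,v} = {{w,x} : {u,w,x} ∈ H and {v,w,x} ∈ H} contains no two disjoint edges; consequently |G_{u,v}| ≤ n − 3. -/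
/-- `H` contains a copy of the configuration `M₂`: two vertex-disjoint triples
whose six vertices occur in clockwise cyclic order `a₁, a₂, b₁, a₃, b₂, b₃`. -/
def HasM2 (n : ℕ) (H : Finset (Finset (ZMod n))) : Prop :=
  ∃ a₁ a₂ a₃ b₁ b₂ b₃ : ZMod n,
    CWList n [a₁, a₂, b₁, a₃, b₂, b₃] ∧
    ({a₁, a₂, a₃} : Finset (ZMod n)) ∈ H ∧ ({b₁, b₂, b₃} : Finset (ZMod n)) ∈ H

def cwDist {n : ℕ} (a b : ZMod n) : ℕ := (b - a).val

section CyclicOrder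

variable {n : ℕ}

theorem cwDist_self (a : ZMod n) : cwDist a a = 0 := by simp [cwDist]

theorem cwDist_eq_of_eq_add {a b : ZMod n} {k : ℕ} (h : b = a + k) (hk : k < n) :
    cwDist a b = k := by
  rw [cwDist, h, add_sub_cancel_left, ZMod.val_cast_of_lt hk]

theorem cwList_iff {a b c d e f : ZMod n} :
    CWList n [a, b, c, d, e, f] ↔ 0 < cwDist a b ∧ cwDist a b < cwDist a c ∧
      cwDist a c < cwDist a d ∧ cwDist a d < cwDist a e ∧ cwDist a e < cwDist a f := by
  change List.IsChain _ _ ↔ _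
  simp only [List.map_cons, List.map_nil, List.isChain_cons_cons, List.isChain_singleton,
    and_true, cwDist]

theorem cwList_of_eq_add {c a₁ a₂ a₃ a₄ a₅ a₆ : ZMod n} {k₁ k₂ k₃ k₄ k₅ k₆ : ℕ}
    (h₁ : a₁ = c + k₁) (h₂ : a₂ = c + k₂) (h₃ : a₃ = c + k₃) (h₄ : a₄ = c + k₄)
    (h₅ : a₅ = c + k₅) (h₆ : a₆ = c + k₆) (h₁₂ : k₁ < k₂) (h₂₃ : k₂ < k₃) (h₃₄ : k₃ < k₄)
    (h₄₅ : k₄ < k₅) (h₅₆ : k₅ < k₆) (h₆₁ : k₆ < k₁ + n) :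
    CWList n [a₁, a₂, a₃, a₄, a₅, a₆] := by
  have hdist : ∀ {a : ZMod n} {k : ℕ}, a = c + k → k₁ ≤ k → k < k₁ + n → cwDist a₁ a = k - k₁ :=
    fun ha hk hk' => cwDist_eq_of_eq_add (by rw [ha, h₁, Nat.cast_sub hk]; ring) (by omega)
  rw [cwList_iff, hdist h₂ (by omega) (by omega), hdist h₃ (by omega) (by omega),
    hdist h₄ (by omega) (by omega), hdist h₅ (by omega) (by omega), hdist h₆ (by omega) h₆₁]
  omega

variable [NeZero n]

theorem add_cwDist (a b : ZMod n) : a + (cwDist a b : ZMod n) = b := by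
  simp [cwDist]

theorem cwDist_injective (a : ZMod n) : Function.Injective (cwDist a) := fun b c h => by
  rw [← add_cwDist a b, h, add_cwDist]

theorem cwDist_pos {a b : ZMod n} (h : a ≠ b) : 0 < cwDist a b :=
  Nat.pos_of_ne_zero fun h0 => h (cwDist_injective a (h0.trans (cwDist_self a).symm)).symm

theorem cwDist_add_one_self (u : ZMod n) : cwDist (u + 1) u = n - 1 :=
  cwDist_eq_of_eq_add (by rw [Nat.cast_pred (NeZero.pos n), ZMod.natCast_self]; ring)
    (Nat.sub_lt (NeZero.pos n) one_pos)

theorem cwDist_lt_pred {u p : ZMod n} (hp : u ≠ p) : cwDist (u + 1) p < n - 1 := by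
  have hne : cwDist (u + 1) p ≠ cwDist (u + 1) u := fun h => hp (cwDist_injective _ h).symm
  have hlt : cwDist (u + 1) p < n := ZMod.val_lt _
  rw [cwDist_add_one_self] at hne
  omega

theorem CWList.rotate_s15 {a b c d e f : ZMod n} (h : CWList n [a, b, c, d, e, f]) :
    CWList n [b, c, d, e, f, a] := by
  rw [cwList_iff] at h
  exact cwList_of_eq_add (c := a) (add_cwDist a b).symm (add_cwDist a c).symm
    (add_cwDist a d).symm (add_cwDist a e).symm (add_cwDist a f).symm
    (by rw [ZMod.natCast_self, add_zero]) h.2.1 h.2.2.1 h.2.2.2.1 h.2.2.2.2 (ZMod.val_lt _)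
    (by omega)

end CyclicOrder

section FinsetPairs

variable {α : Type*} [DecidableEq α] {𝒜 : Set (Finset α)}

theorem insert_pair_rotate (a b c : α) : ({a, b, c} : Finset α) = {b, c, a} := by
  rw [Finset.insert_comm, Finset.pair_comm]

theorem ne_of_card_eq_three {a b c : α} (h : ({a, b, c} : Finset α).card = 3) : a ≠ b ∧ a ≠ c := by
  have hnot : a ∉ ({b, c} : Finset α) := fun hm => by
    have := Finset.card_le_two (a := b) (b := c)
    rw [Finset.card_insert_of_mem hm] at h
    omega
  simpa using hnot

theorem exists_eq_pair_of_mem {e : Finset α} (he : e.card = 2) {a : α} (ha : a ∈ e) :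
    ∃ b, a ≠ b ∧ e = {a, b} := by
  obtain ⟨x, y, hxy, rfl⟩ := Finset.card_eq_two.1 he
  simp only [Finset.mem_insert, Finset.mem_singleton] at ha
  rcases ha with rfl | rfl
  · exact ⟨y, hxy, rfl⟩
  · exact ⟨x, hxy.symm, Finset.pair_comm _ _⟩

theorem Set.ncard_le_card_sub_one_of_forall_mem (h2 : ∀ e ∈ 𝒜, e.card = 2) {s : Finset α}
    (hs : ∀ e ∈ 𝒜, e ⊆ s) {c : α} (hc : c ∈ s) (hstar : ∀ e ∈ 𝒜, c ∈ e) :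
    𝒜.ncard ≤ s.card - 1 := by
  have hsub : 𝒜 ⊆ ((s.erase c).image fun b => ({c, b} : Finset α) :) := by
    intro e he
    obtain ⟨b, hcb, rfl⟩ := exists_eq_pair_of_mem (h2 e he) (hstar e he)
    exact Finset.mem_coe.2
      (Finset.mem_image.2 ⟨b, Finset.mem_erase.2 ⟨hcb.symm, hs _ he (by simp)⟩, rfl⟩)
  calc 𝒜.ncard ≤ ((s.erase c).image fun b => ({c, b} : Finset α)).card :=
        (Set.ncard_le_ncard hsub (Finset.finite_toSet _)).trans_eq (Set.ncard_coe_finset _)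
    _ ≤ (s.erase c).card := Finset.card_image_le
    _ = s.card - 1 := Finset.card_erase_of_mem hc

theorem pair_subset_of_not_disjoint {a b c x y : α} (hab : a ≠ b) (hbc : b ≠ c) (hac : a ≠ c)
    (h₁ : ¬Disjoint ({x, y} : Finset α) {a, b}) (h₂ : ¬Disjoint ({x, y} : Finset α) {b, c})
    (h₃ : ¬Disjoint ({x, y} : Finset α) {a, c}) : ({x, y} : Finset α) ⊆ {a, b, c} := by
  simp only [Finset.disjoint_insert_left, Finset.disjoint_singleton_left, Finset.mem_insert,
    Finset.mem_singleton] at h₁ h₂ h₃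
  simp only [Finset.insert_subset_iff, Finset.singleton_subset_iff, Finset.mem_insert,
    Finset.mem_singleton]
  grind

theorem Set.Intersecting.ncard_le_three (h𝒜 : 𝒜.Intersecting) (h2 : ∀ e ∈ 𝒜, e.card = 2)
    {a b c : α} (hab : a ≠ b) (hbc : b ≠ c) (hac : a ≠ c) (h₁ : {a, b} ∈ 𝒜) (h₂ : {b, c} ∈ 𝒜)
    (h₃ : {a, c} ∈ 𝒜) : 𝒜.ncard ≤ 3 := by
  have hsub : 𝒜 ⊆ (({a, b, c} : Finset α).powersetCard 2 :) := by
    intro e he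
    obtain ⟨x, y, -, rfl⟩ := Finset.card_eq_two.1 (h2 e he)
    exact Finset.mem_powersetCard.2 ⟨pair_subset_of_not_disjoint hab hbc hac (h𝒜 he h₁)
      (h𝒜 he h₂) (h𝒜 he h₃), h2 _ he⟩
  calc 𝒜.ncard ≤ (({a, b, c} : Finset α).powersetCard 2).card :=
        (Set.ncard_le_ncard hsub (Finset.finite_toSet _)).trans_eq (Set.ncard_coe_finset _)
    _ = 3 := by
      rw [Finset.card_powersetCard, Finset.card_eq_three.2 ⟨a, b, c, hab, hac, hbc, rfl⟩]
      rfl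

theorem Set.Intersecting.ncard_le_max (h𝒜 : 𝒜.Intersecting) (h2 : ∀ e ∈ 𝒜, e.card = 2)
    {s : Finset α} (hs : ∀ e ∈ 𝒜, e ⊆ s) : 𝒜.ncard ≤ max 3 (s.card - 1) := by
  obtain rfl | ⟨e₀, he₀⟩ := 𝒜.eq_empty_or_nonempty
  · simp
  by_cases hstar : ∃ c, ∀ e ∈ 𝒜, c ∈ e
  · obtain ⟨c, hc⟩ := hstar
    exact le_max_of_le_right
      (Set.ncard_le_card_sub_one_of_forall_mem h2 hs (hs _ he₀ (hc _ he₀)) hc)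
  push Not at hstar
  obtain ⟨a, b, hab, rfl⟩ := Finset.card_eq_two.1 (h2 _ he₀)
  have meets {e : Finset α} (he : e ∈ 𝒜) {p q : α} (hp : p ∉ e) (hpq : {p, q} ∈ 𝒜) : q ∈ e := by
    simpa [Finset.disjoint_insert_left, hp] using h𝒜 hpq he
  obtain ⟨e₁, he₁, hae₁⟩ := hstar a
  obtain ⟨c, hbc, rfl⟩ := exists_eq_pair_of_mem (h2 _ he₁) (meets he₁ hae₁ he₀)
  obtain ⟨e₂, he₂, hbe₂⟩ := hstar b
  have hac : a ≠ c := fun h => hae₁ (by simp [h])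
  have he₂_eq : e₂ = {a, c} := by
    refine (Finset.eq_of_subset_of_card_le ?_ ?_).symm
    · simp [Finset.insert_subset_iff, meets he₂ hbe₂ (Finset.pair_comm a b ▸ he₀),
        meets he₂ hbe₂ he₁]
    · rw [h2 _ he₂, Finset.card_pair hac]
  exact le_max_of_le_left (h𝒜.ncard_le_three h2 hab hbc hac he₀ he₁ (he₂_eq ▸ he₂))

end FinsetPairs

def commonLink {α : Type*} [DecidableEq α] (H : Finset (Finset α)) (u v : α) : Set (Finset α) :=
  {p | ∃ w x, w ≠ x ∧ p = {w, x} ∧ {u, w, x} ∈ H ∧ {v, w, x} ∈ H}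

theorem ncard_commonLink_le {α : Type*} [DecidableEq α] [Fintype α] {H : Finset (Finset α)}
    (hH : ∀ e ∈ H, e.card = 3) {u v : α} (huv : u ≠ v) (hint : (commonLink H u v).Intersecting) :
    (commonLink H u v).ncard ≤ max 3 (Fintype.card α - 3) := by
  have hs : (Finset.univ \ {u, v} : Finset α).card = Fintype.card α - 2 := by
    rw [Finset.card_sdiff_of_subset (Finset.subset_univ _), Finset.card_univ, Finset.card_pair huv]
  refine (hint.ncard_le_max ?_ ?_).trans_eq (by rw [hs, Nat.sub_sub])
  · rintro _ ⟨w, x, hwx, rfl, -, -⟩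
    exact Finset.card_pair hwx
  · rintro _ ⟨w, x, -, rfl, hu, hv⟩
    obtain ⟨huw, hux⟩ := ne_of_card_eq_three (hH _ hu)
    obtain ⟨hvw, hvx⟩ := ne_of_card_eq_three (hH _ hv)
    simp [Finset.insert_subset_iff, huw.symm, hux.symm, hvw.symm, hvx.symm]

section M2

variable {n : ℕ} {H : Finset (Finset (ZMod n))} {u p₁ p₂ p₃ p₄ : ZMod n}

theorem cwList_of_cwDist_lt [NeZero n] (h₁ : u + 1 ≠ p₁)
    (h₁₂ : cwDist (u + 1) p₁ < cwDist (u + 1) p₂)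
    (h₂₃ : cwDist (u + 1) p₂ < cwDist (u + 1) p₃) (h₃₄ : cwDist (u + 1) p₃ < cwDist (u + 1) p₄)
    (h₄ : u ≠ p₄) : CWList n [u + 1, p₁, p₂, p₃, p₄, u] := by
  rw [cwList_iff, cwDist_add_one_self]
  exact ⟨cwDist_pos h₁, h₁₂, h₂₃, h₃₄, cwDist_lt_pred h₄⟩

theorem hasM2_of_separated [NeZero n] (h : CWList n [u + 1, p₁, p₂, p₃, p₄, u])
    (hA : ({u, p₁, p₂} : Finset (ZMod n)) ∈ H) (hB : ({u + 1, p₃, p₄} : Finset (ZMod n)) ∈ H) :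
    HasM2 n H := by
  refine ⟨p₃, p₄, u + 1, u, p₁, p₂, h.rotate_s15.rotate_s15.rotate_s15, ?_, hA⟩
  rwa [← insert_pair_rotate]

theorem hasM2_of_crossing (h : CWList n [u + 1, p₁, p₂, p₃, p₄, u])
    (hA : ({u + 1, p₁, p₃} : Finset (ZMod n)) ∈ H) (hB : ({u, p₂, p₄} : Finset (ZMod n)) ∈ H) :
    HasM2 n H := by
  refine ⟨u + 1, p₁, p₃, p₂, p₄, u, h, hA, ?_⟩
  rwa [← insert_pair_rotate]

theorem hasM2_of_nested [NeZero n] (h : CWList n [u + 1, p₁, p₂, p₃, p₄, u])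
    (hA : ({u, p₁, p₄} : Finset (ZMod n)) ∈ H) (hB : ({u + 1, p₂, p₃} : Finset (ZMod n)) ∈ H) :
    HasM2 n H := by
  refine ⟨p₄, u, p₁, u + 1, p₂, p₃, h.rotate_s15.rotate_s15.rotate_s15.rotate_s15, ?_, hB⟩
  rwa [insert_pair_rotate]

theorem hasM2_of_disjoint_link_edges [NeZero n] (hcgh : IsCgh n H) {w x y z : ZMod n}
    (hwx : w ≠ x) (hyz : y ≠ z)
    (h₁ : ({u, w, x} : Finset (ZMod n)) ∈ H) (h₂ : ({u + 1, w, x} : Finset (ZMod n)) ∈ H)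
    (h₃ : ({u, y, z} : Finset (ZMod n)) ∈ H) (h₄ : ({u + 1, y, z} : Finset (ZMod n)) ∈ H)
    (hd : Disjoint ({w, x} : Finset (ZMod n)) {y, z}) : HasM2 n H := by
  have hswap {a b : ZMod n} (hab : a ≠ b) (h : ¬cwDist (u + 1) a < cwDist (u + 1) b) :
      cwDist (u + 1) b < cwDist (u + 1) a :=
    lt_of_le_of_ne (not_lt.1 h) ((cwDist_injective _).ne hab.symm)
  wlog hwx' : cwDist (u + 1) w < cwDist (u + 1) x generalizing w x
  · rw [Finset.pair_comm w x] at h₁ h₂ hd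
    exact this hwx.symm h₁ h₂ hd (hswap hwx hwx')
  wlog hyz' : cwDist (u + 1) y < cwDist (u + 1) z generalizing y z
  · rw [Finset.pair_comm y z] at h₃ h₄ hd
    exact this hyz.symm h₃ h₄ hd (hswap hyz hyz')
  simp only [Finset.disjoint_insert_left, Finset.disjoint_singleton_left, Finset.mem_insert,
    Finset.mem_singleton, not_or] at hd
  obtain ⟨⟨hwy, hwz⟩, hxy, hxz⟩ := hd
  wlog hwy' : cwDist (u + 1) w < cwDist (u + 1) y generalizing w x y z
  · exact this hyz h₃ h₄ hyz' hwx h₁ h₂ hwx' (Ne.symm hwy) (Ne.symm hxy) (Ne.symm hwz)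
      (Ne.symm hxz) (hswap hwy hwy')
  obtain ⟨hvw, -⟩ := ne_of_card_eq_three (hcgh _ h₂)
  obtain ⟨-, hux⟩ := ne_of_card_eq_three (hcgh _ h₁)
  obtain ⟨-, huz⟩ := ne_of_card_eq_three (hcgh _ h₃)
  rcases ((cwDist_injective _).ne hxy).lt_or_gt with hxy' | hyx'
  · exact hasM2_of_separated (cwList_of_cwDist_lt hvw hwx' hxy' hyz' huz) h₁ h₄
  rcases ((cwDist_injective _).ne hxz).lt_or_gt with hxz' | hzx'
  · exact hasM2_of_crossing (cwList_of_cwDist_lt hvw hwy' hyx' hxz' huz) h₂ h₃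
  · exact hasM2_of_nested (cwList_of_cwDist_lt hvw hwy' hyz' hzx' hux) h₁ h₄

theorem commonLink_intersecting [NeZero n] (hcgh : IsCgh n H) (hfree : ¬HasM2 n H) :
    (commonLink H u (u + 1)).Intersecting := by
  rintro _ ⟨w, x, hwx, rfl, h₁, h₂⟩ _ ⟨y, z, hyz, rfl, h₃, h₄⟩ hd
  exact hfree (hasM2_of_disjoint_link_edges hcgh hwx hyz h₁ h₂ h₃ h₄ hd)

end M2

theorem M2_common_link (n : ℕ) (hn : 6 ≤ n)
    (H : Finset (Finset (ZMod n))) (hcgh : IsCgh n H) (hfree : ¬ HasM2 n H)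
    (u : ZMod n) :
    (∀ w x y z : ZMod n, w ≠ x → y ≠ z →
      ({u, w, x} : Finset (ZMod n)) ∈ H → ({u + 1, w, x} : Finset (ZMod n)) ∈ H →
      ({u, y, z} : Finset (ZMod n)) ∈ H → ({u + 1, y, z} : Finset (ZMod n)) ∈ H →
      ¬ Disjoint ({w, x} : Finset (ZMod n)) ({y, z} : Finset (ZMod n))) ∧
    {p : Finset (ZMod n) | ∃ w x : ZMod n, w ≠ x ∧ p = {w, x} ∧
        ({u, w, x} : Finset (ZMod n)) ∈ H ∧
        ({u + 1, w, x} : Finset (ZMod n)) ∈ H}.ncard ≤ n - 3 := by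
  have : NeZero n := ⟨by omega⟩
  have : Nontrivial (ZMod n) := ZMod.nontrivial_iff.2 (by omega)
  have hint : (commonLink H u (u + 1)).Intersecting := commonLink_intersecting hcgh hfree
  refine ⟨fun w x y z hwx hyz h₁ h₂ h₃ h₄ =>
    hint ⟨w, x, hwx, rfl, h₁, h₂⟩ ⟨y, z, hyz, rfl, h₃, h₄⟩, ?_⟩
  calc _ ≤ max 3 (Fintype.card (ZMod n) - 3) := ncard_commonLink_le hcgh (by simp) hint
    _ = n - 3 := by rw [ZMod.card]; omega
end

section
/- Let n ≥ 8 and let H be a maximal M_2-free cgh on Ω_n, i.e., H is M_2-free and for every triple e ∉ H the family H ∪ {e} contains a copy of M_2. Then there exists an index i such that the pair {v_i, v_{i+1}} of cyclically consecutive vertices has degree at most three in H, i.e., at most three triples of H contain both v_i and v_{i+1}. -/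
/-!
If every pair `{i, i + 1}` lay in four triples of `H`, it would have four apexes (third vertices),
hence one at clockwise distance between `4` and `n - 2` from `i`. Take such a far apex `x` of a pair
`{p, p + 1}` with `t = x - p` minimal. Triples `{i, i + 1, x}` and `{j, j + 1, y}` with
`i, i + 1, y, x, j, j + 1` in clockwise order form an `M₂`. Hence the pair `{x - 2, x - 1}` has no
apex strictly between `x` and `p`, and none from `p` to `x - 5` either: such an apex `z` would leave
`{z + 1, z + 2}`, besides `z`, only apexes at distance less than `t`, which are not far, so at most
three. Thus the apexes of `{x - 2, x - 1}` are among `x`, `x - 3`, `x - 4`.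
-/

open Finset

lemma Finset.exists_eq_of_card_eq_three {α : Type*} [DecidableEq α] {e : Finset α}
    {a b : α} (he : e.card = 3) (ha : a ∈ e) (hb : b ∈ e) (hab : a ≠ b) :
    ∃ x ∈ e, x ≠ a ∧ x ≠ b ∧ e = {a, b, x} := by
  have hab_sub : {a, b} ⊆ e := by simp [insert_subset_iff, ha, hb]
  obtain ⟨x, hx⟩ : ∃ x, e \ {a, b} = {x} := by
    rw [← card_eq_one, card_sdiff_of_subset hab_sub, he, card_pair hab]
  have hxe : x ∈ e \ {a, b} := hx ▸ mem_singleton_self x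
  simp only [mem_sdiff, mem_insert, mem_singleton, not_or] at hxe
  refine ⟨x, hxe.1, hxe.2.1, hxe.2.2, ?_⟩
  rw [← sdiff_union_of_subset hab_sub, hx]
  ext y; simp only [mem_union, mem_insert, mem_singleton]; tauto

namespace ConvexM2

variable {n : ℕ}

lemma hasM2_of_interleaved {H : Finset (Finset (ZMod n))} {i x j y : ZMod n}
    (hx : {i, i + 1, x} ∈ H) (hy : {j, j + 1, y} ∈ H) (hy₂ : 2 ≤ (y - i).val)
    (hyx : (y - i).val < (x - i).val) (hxj : (x - i).val < (j - i).val)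
    (hj : (j - i).val + 2 ≤ n) : HasM2 n H := by
  have : Fact (1 < n) := ⟨by omega⟩
  refine ⟨i, i + 1, x, y, j, j + 1, ?_, hx, ?_⟩
  · have hj₁ : (j + 1 - i).val = (j - i).val + 1 := by
      rw [add_sub_right_comm, ZMod.val_add_of_lt] <;> rw [ZMod.val_one]; omega
    show List.IsChain _ _
    simp only [List.map_cons, List.map_nil, add_sub_cancel_left, ZMod.val_one, hj₁,
      List.isChain_cons_cons, List.isChain_singleton, and_true]
    omega
  · rwa [insert_comm y j, pair_comm y (j + 1)]

variable [NeZero n]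

lemma val_sub_eq_ite (a b : ZMod n) :
    (a - b).val = if b.val ≤ a.val then a.val - b.val else n + a.val - b.val := by
  split_ifs with h
  · exact ZMod.val_sub h
  · have hb : NeZero b := ⟨by rintro rfl; simp at h⟩
    have hneg := ZMod.val_neg_of_ne_zero b
    have := a.val_lt
    have := b.val_lt
    rw [sub_eq_add_neg, ZMod.val_add_of_lt] <;> omega

lemma two_le_val_sub {x i : ZMod n} (hxi : x ≠ i) (hxi₁ : x ≠ i + 1) :
    2 ≤ (x - i).val := by
  have h0 : (x - i).val ≠ 0 := by rwa [ne_eq, ZMod.val_eq_zero, sub_eq_zero]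
  have h1 : (x - i).val ≠ 1 := by
    have hn : n ≠ 1 := by rintro rfl; exact hxi (Subsingleton.elim _ _)
    rw [← ZMod.val_one'' hn, ne_eq, (ZMod.val_injective n).eq_iff, sub_eq_iff_eq_add']
    exact hxi₁
  omega

lemma card_le_three_of_val_sub_mem {S : Finset (ZMod n)} {i : ZMod n} {a b c : ℕ}
    (h : ∀ x ∈ S, (x - i).val ∈ ({a, b, c} : Finset ℕ)) : S.card ≤ 3 :=
  (card_le_card_of_injOn _ h fun _ _ _ _ hxy =>
    sub_left_injective (ZMod.val_injective n hxy)).trans card_le_three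

/-- The third vertices of the triples of `H` through the consecutive pair `{i, i + 1}`;
`2 ≤ (x - i).val` says that `x ∉ {i, i + 1}`. -/
def apexes (H : Finset (Finset (ZMod n))) (i : ZMod n) : Finset (ZMod n) :=
  univ.filter fun x => {i, i + 1, x} ∈ H ∧ 2 ≤ (x - i).val

lemma mem_apexes {H : Finset (Finset (ZMod n))} {i x : ZMod n} :
    x ∈ apexes H i ↔ {i, i + 1, x} ∈ H ∧ 2 ≤ (x - i).val := by
  simp [apexes]

lemma card_filter_pair_le_card_apexes (hn : 1 < n) {H : Finset (Finset (ZMod n))}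
    (hH : IsCgh n H) (i : ZMod n) :
    (H.filter fun e => i ∈ e ∧ i + 1 ∈ e).card ≤ (apexes H i).card := by
  have hi : i ≠ i + 1 := by
    have : Fact (1 < n) := ⟨hn⟩
    simp
  refine (card_le_card fun e he => ?_).trans (card_image_le (f := fun x => {i, i + 1, x}))
  obtain ⟨heH, hie, hie₁⟩ := mem_filter.1 he
  obtain ⟨x, -, hxi, hxi₁, rfl⟩ := exists_eq_of_card_eq_three (hH e heH) hie hie₁ hi
  exact mem_image.2 ⟨x, mem_apexes.2 ⟨heH, two_le_val_sub hxi hxi₁⟩, rfl⟩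

/-- `x` is an apex of the pair `{p, p + 1}` other than the three nearest candidates
`p + 2`, `p + 3` and `p - 1`. -/
def IsFarApex (H : Finset (Finset (ZMod n))) (p x : ZMod n) : Prop :=
  x ∈ apexes H p ∧ 4 ≤ (x - p).val ∧ (x - p).val + 2 ≤ n

variable {H : Finset (Finset (ZMod n))}

lemma exists_isFarApex {i : ZMod n} (h : 4 ≤ (apexes H i).card) : ∃ x, IsFarApex H i x := by
  by_contra! hnear
  have : (apexes H i).card ≤ 3 :=
    card_le_three_of_val_sub_mem (i := i) (a := 2) (b := 3) (c := n - 1) fun x hx => by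
      have h₂ := (mem_apexes.1 hx).2
      have := (x - i).val_lt
      have := hnear x
      simp only [IsFarApex, hx, true_and, not_and, not_le] at this
      simp only [mem_insert, mem_singleton]
      omega
  omega

lemma exists_isFarApex_minimal (hdeg : ∀ i, 4 ≤ (apexes H i).card) :
    ∃ p x, IsFarApex H p x ∧ ∀ p' x', IsFarApex H p' x' → (x - p).val ≤ (x' - p').val := by
  classical
  obtain ⟨x₀, hx₀⟩ := exists_isFarApex (hdeg 0)
  obtain ⟨⟨p, x⟩, hpx, hmin⟩ := (univ.filter fun px : ZMod n × ZMod n => IsFarApex H px.1 px.2)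
    |>.exists_min_image (fun px => (px.2 - px.1).val) ⟨(0, x₀), by simpa using hx₀⟩
  exact ⟨p, x, (mem_filter.1 hpx).2, fun p' x' h => hmin (p', x') (by simpa using h)⟩

variable {p x : ZMod n}

/-- The pair `{x - 2, x - 1}` has no apex strictly between `x` and `p`: it would cross the
triple `{p, p + 1, x}`. -/
lemma IsFarApex.val_sub_of_mem_apexes (hfree : ¬ HasM2 n H) (hx : IsFarApex H p x) {z : ZMod n}
    (hz : z ∈ apexes H (x - 2)) :
    (z - (x - 2)).val = 2 ∨ n + 2 ≤ (z - (x - 2)).val + (x - p).val := by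
  obtain ⟨hxp, ht₄, htn⟩ := hx
  have h₂ : (2 : ZMod n).val = 2 := ZMod.val_ofNat_of_lt (show 2 < n by omega)
  have hx₂ : (x - (x - 2)).val = 2 := by rw [sub_sub_cancel, h₂]
  have hp : (p - (x - 2)).val = n + 2 - (x - p).val := by
    rw [show p - (x - 2) = 2 - (x - p) by ring, val_sub_eq_ite, h₂, if_neg (by omega)]
  obtain ⟨hzH, hz₂⟩ := mem_apexes.1 hz
  by_contra! h
  exact hfree <| hasM2_of_interleaved hzH (mem_apexes.1 hxp).1
    (by omega) (by omega) (by omega) (by omega)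

/-- Apexes of `{z + 1, z + 2}` strictly between `q + 1` and `z` would cross `{q, q + 1, z}`, so all
apexes but `z` lie on the arc from `z + 3` to `q + 1`, too short to hold a far one. -/
lemma card_apexes_add_one_le_three (hfree : ¬ HasM2 n H) {t : ℕ}
    (hmin : ∀ p x, IsFarApex H p x → t ≤ (x - p).val) {q z : ZMod n} (hz : z ∈ apexes H q)
    (hzt : n < (z - q).val + t) (hzn : (z - q).val + 3 ≤ n) : (apexes H (z + 1)).card ≤ 3 := by
  have hm : (z + 1 - q).val = (z - q).val + 1 := by
    rw [add_sub_right_comm, ZMod.val_add_of_lt] <;> rw [ZMod.val_one'' (by omega)]; omega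
  refine card_le_three_of_val_sub_mem (i := z + 1) (a := 2) (b := 3) (c := n - 1) fun y hy => ?_
  obtain ⟨hyH, hy₂⟩ := mem_apexes.1 hy
  have hyz : (y - (z + 1)).val =
      if (z + 1 - q).val ≤ (y - q).val then (y - q).val - (z + 1 - q).val
      else n + (y - q).val - (z + 1 - q).val := by
    rw [← val_sub_eq_ite, sub_sub_sub_cancel_right]
  have hnot_between : ¬ (2 ≤ (y - q).val ∧ (y - q).val < (z - q).val) := fun h =>
    hfree (hasM2_of_interleaved (mem_apexes.1 hz).1 hyH h.1 h.2 (by omega) (by omega))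
  have hy_lt := (y - q).val_lt
  have hyz_lt := (y - (z + 1)).val_lt
  have hshort : (y - (z + 1)).val = n - 1 ∨ (y - (z + 1)).val < t := by
    rw [hyz, hm]; split_ifs <;> omega
  have hnear : ¬ IsFarApex H (z + 1) y ∨ (y - (z + 1)).val = n - 1 :=
    hshort.symm.imp_left fun h hfar => (hmin _ _ hfar).not_gt h
  simp only [IsFarApex, hy, true_and, not_and, not_le, mem_insert, mem_singleton] at hnear ⊢
  omega

lemma false_of_forall_four_le_card_apexes (hfree : ¬ HasM2 n H)
    (hdeg : ∀ i, 4 ≤ (apexes H i).card) : False := by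
  obtain ⟨p, x, hx, hmin⟩ := exists_isFarApex_minimal hdeg
  have : (apexes H (x - 2)).card ≤ 3 :=
    card_le_three_of_val_sub_mem (i := x - 2) (a := 2) (b := n - 2) (c := n - 1) fun z hz => by
      have := (z - (x - 2)).val_lt
      have hfar := hx.val_sub_of_mem_apexes hfree hz
      have hnot_mid : ¬ (n + 2 ≤ (z - (x - 2)).val + (x - p).val ∧ (z - (x - 2)).val + 3 ≤ n) :=
        fun h => (card_apexes_add_one_le_three hfree hmin hz (by omega) h.2).not_gt (hdeg _)
      simp only [mem_insert, mem_singleton]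
      omega
  exact this.not_gt (hdeg _)

end ConvexM2

theorem M2_maximal_low_pair_degree_general (n : ℕ) (hn : 8 ≤ n)
    (H : Finset (Finset (ZMod n))) (hcgh : IsCgh n H) (hfree : ¬ HasM2 n H) :
    ∃ i : ZMod n, (H.filter fun e => i ∈ e ∧ i + 1 ∈ e).card ≤ 3 := by
  have : NeZero n := ⟨by omega⟩
  by_contra! hdeg
  exact ConvexM2.false_of_forall_four_le_card_apexes hfree fun i =>
    (hdeg i).trans_le (ConvexM2.card_filter_pair_le_card_apexes (by omega) hcgh i)

theorem M2_maximal_low_pair_degree (n : ℕ) (hn : 8 ≤ n)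
    (H : Finset (Finset (ZMod n))) (hcgh : IsCgh n H) (hfree : ¬ HasM2 n H)
    (hmax : ∀ e : Finset (ZMod n), e.card = 3 → e ∉ H → HasM2 n (insert e H)) :
    ∃ i : ZMod n, (H.filter fun e => i ∈ e ∧ i + 1 ∈ e).card ≤ 3 :=
  M2_maximal_low_pair_degree_general n hn H hcgh hfree
end

section
/- Let n ≥ 4, let H be an S_3-free cgh on Ω_n, and let u ∈ Ω_n. Then the number of edges {w,x} of the link graph G_u such that w and x are not cyclically consecutive vertices of Ω_n is at most n − 3. -/
/-- `H` contains a copy of the configuration `S₃`: two triples sharing exactly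
the vertex `v`, with the five vertices in clockwise cyclic order `v, a₁, b₁, a₂, b₂`. -/
def HasS3 (n : ℕ) (H : Finset (Finset (ZMod n))) : Prop :=
  ∃ v a₁ a₂ b₁ b₂ : ZMod n,
    CWList n [v, a₁, b₁, a₂, b₂] ∧
    ({v, a₁, a₂} : Finset (ZMod n)) ∈ H ∧ ({v, b₁, b₂} : Finset (ZMod n)) ∈ H

/-!
Measure every vertex by its clockwise distance from `u`. A link edge `{w, x}` of `u` joining
non-consecutive vertices becomes an interval `[a, b] ⊆ [1, n - 1]` with `b ≥ a + 2`, and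
`S₃`-freeness says exactly that no two of these intervals cross. A shortest interval `[a, b]`
then contains no endpoint of another interval in its interior, so deleting the point `a + 1`
leaves a noncrossing family on one point fewer with one interval fewer. By induction, a
noncrossing family of such intervals in `[1, m]` has at most `m - 2` members.
-/

/-- A pair `p` stands for the interval `[p.1, p.2]`; nested intervals and intervals sharing an
endpoint do not cross. -/
def IsNoncrossing (F : Finset (ℕ × ℕ)) : Prop :=
  ∀ p ∈ F, ∀ q ∈ F, ¬(p.1 < q.1 ∧ q.1 < p.2 ∧ p.2 < q.2)

/-- Relabelling of `ℕ \ {c}` after the point `c` is removed from the line. -/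
def deletePoint (c x : ℕ) : ℕ := if x < c then x else x - 1

lemma deletePoint_lt_deletePoint_iff {c x y : ℕ} (hx : x ≠ c) (hy : y ≠ c) :
    deletePoint c x < deletePoint c y ↔ x < y := by
  unfold deletePoint; split_ifs <;> omega

lemma deletePoint_inj {c x y : ℕ} (hx : x ≠ c) (hy : y ≠ c) :
    deletePoint c x = deletePoint c y ↔ x = y := by
  unfold deletePoint; split_ifs <;> omega

lemma card_image_deletePoint {F : Finset (ℕ × ℕ)} {c : ℕ} (hc : ∀ p ∈ F, p.1 ≠ c ∧ p.2 ≠ c) :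
    (F.image (Prod.map (deletePoint c) (deletePoint c))).card = F.card := by
  refine Finset.card_image_of_injOn fun p hp q hq h => ?_
  obtain ⟨hp₁, hp₂⟩ := hc p hp
  obtain ⟨hq₁, hq₂⟩ := hc q hq
  simp only [Prod.map, Prod.mk.injEq, deletePoint_inj hp₁ hq₁, deletePoint_inj hp₂ hq₂] at h
  exact Prod.ext h.1 h.2

namespace IsNoncrossing

variable {F : Finset (ℕ × ℕ)} {c : ℕ}

lemma image_deletePoint (hF : IsNoncrossing F) (hc : ∀ p ∈ F, p.1 ≠ c ∧ p.2 ≠ c) :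
    IsNoncrossing (F.image (Prod.map (deletePoint c) (deletePoint c))) := by
  simp only [IsNoncrossing, Finset.forall_mem_image]
  intro p hp q hq hcross
  obtain ⟨hp₁, hp₂⟩ := hc p hp
  obtain ⟨hq₁, hq₂⟩ := hc q hq
  simp only [Prod.map_fst, Prod.map_snd, deletePoint_lt_deletePoint_iff hp₁ hq₁,
    deletePoint_lt_deletePoint_iff hq₁ hp₂, deletePoint_lt_deletePoint_iff hp₂ hq₂] at hcross
  exact hF p hp q hq hcross

lemma subset {G : Finset (ℕ × ℕ)} (hF : IsNoncrossing F) (hGF : G ⊆ F) : IsNoncrossing G :=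
  fun p hp q hq => hF p (hGF hp) q (hGF hq)

lemma endpoints_outside_of_shortest (hF : IsNoncrossing F) (hlt : ∀ p ∈ F, p.1 < p.2)
    {s : ℕ × ℕ} (hs : s ∈ F) (hmin : ∀ p ∈ F, s.2 - s.1 ≤ p.2 - p.1)
    {p : ℕ × ℕ} (hp : p ∈ F) (hps : p ≠ s) :
    (p.1 ≤ s.1 ∨ s.2 ≤ p.1) ∧ (p.2 ≤ s.1 ∨ s.2 ≤ p.2) := by
  have hsp := hF s hs p hp
  have hps' := hF p hp s hs
  have := hmin p hp
  have := hlt p hp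
  have := hlt s hs
  have := mt Prod.ext_iff.2 hps
  omega

variable {m : ℕ}

lemma exists_card_add_one_eq (hbd : ∀ p ∈ F, 1 ≤ p.1 ∧ p.1 + 2 ≤ p.2 ∧ p.2 ≤ m)
    (hF : IsNoncrossing F) (hne : F.Nonempty) :
    ∃ G : Finset (ℕ × ℕ), G.card + 1 = F.card ∧
      (∀ p ∈ G, 1 ≤ p.1 ∧ p.1 + 2 ≤ p.2 ∧ p.2 ≤ m - 1) ∧ IsNoncrossing G := by
  obtain ⟨s, hs, hmin⟩ := F.exists_min_image (fun p => p.2 - p.1) hne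
  have hs_bd := hbd s hs
  have hout : ∀ p ∈ F.erase s, (p.1 ≤ s.1 ∨ s.2 ≤ p.1) ∧ (p.2 ≤ s.1 ∨ s.2 ≤ p.2) := fun p hp =>
    endpoints_outside_of_shortest hF (fun q hq => by have := hbd q hq; omega) hs hmin
      (Finset.mem_of_mem_erase hp) (Finset.ne_of_mem_erase hp)
  have hc : ∀ p ∈ F.erase s, p.1 ≠ s.1 + 1 ∧ p.2 ≠ s.1 + 1 := fun p hp => by
    have := hout p hp
    omega
  refine ⟨(F.erase s).image (Prod.map (deletePoint (s.1 + 1)) (deletePoint (s.1 + 1))),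
    ?_, ?_, (hF.subset (F.erase_subset s)).image_deletePoint hc⟩
  · rw [card_image_deletePoint hc, Finset.card_erase_add_one hs]
  · simp only [Finset.forall_mem_image]
    intro p hp
    have := hout p hp
    have := hbd p (Finset.mem_of_mem_erase hp)
    -- an interval straddling `s.1 + 1` strictly contains `s`, so it has length at least 3
    have := hmin p (Finset.mem_of_mem_erase hp)
    have := mt Prod.ext_iff.2 (Finset.ne_of_mem_erase hp)
    simp only [Prod.map_fst, Prod.map_snd, deletePoint]
    split_ifs <;> omega

theorem card_le (hbd : ∀ p ∈ F, 1 ≤ p.1 ∧ p.1 + 2 ≤ p.2 ∧ p.2 ≤ m) (hF : IsNoncrossing F) :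
    F.card ≤ m - 2 := by
  induction m generalizing F with
  | zero =>
    obtain rfl : F = ∅ := Finset.eq_empty_of_forall_notMem fun p hp => by
      have := hbd p hp
      omega
    simp
  | succ m ih =>
    rcases F.eq_empty_or_nonempty with rfl | hne
    · simp
    obtain ⟨G, hcard, hG, hGnc⟩ := exists_card_add_one_eq hbd hF hne
    have := ih hG hGnc
    have := hbd _ hne.choose_spec
    omega

end IsNoncrossing

lemma ZMod.val_add_natCast_sub_self {n a : ℕ} (u : ZMod n) (ha : a < n) :
    (u + a - u).val = a := by
  rw [add_sub_cancel_left, ZMod.val_natCast_of_lt ha]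

/-- The link edges of `u` between non-consecutive vertices, each recorded as the pair of
clockwise distances of its endpoints from `u`. -/
def linkChords (n : ℕ) (H : Finset (Finset (ZMod n))) (u : ZMod n) : Finset (ℕ × ℕ) :=
  {p ∈ Finset.Icc 1 (n - 1) ×ˢ Finset.Icc 1 (n - 1) |
    p.1 + 2 ≤ p.2 ∧ ({u, u + p.1, u + p.2} : Finset (ZMod n)) ∈ H}

section linkChords

variable {n : ℕ} {H : Finset (Finset (ZMod n))} {u : ZMod n}

lemma bounds_of_mem_linkChords {p : ℕ × ℕ} (hp : p ∈ linkChords n H u) :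
    1 ≤ p.1 ∧ p.1 + 2 ≤ p.2 ∧ p.2 ≤ n - 1 := by
  simp only [linkChords, Finset.mem_filter, Finset.mem_product, Finset.mem_Icc] at hp
  omega

lemma isNoncrossing_linkChords (hfree : ¬ HasS3 n H) : IsNoncrossing (linkChords n H u) := by
  rintro ⟨a, b⟩ hab ⟨c, d⟩ hcd ⟨hac, hcb, hbd⟩
  have := bounds_of_mem_linkChords hab
  have := bounds_of_mem_linkChords hcd
  refine hfree ⟨u, u + a, u + b, u + c, u + d, ?_, (Finset.mem_filter.1 hab).2.2,
    (Finset.mem_filter.1 hcd).2.2⟩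
  simp only [CWList, List.map_cons, List.map_nil,
    ZMod.val_add_natCast_sub_self u (show a < n by omega),
    ZMod.val_add_natCast_sub_self u (show b < n by omega),
    ZMod.val_add_natCast_sub_self u (show c < n by omega),
    ZMod.val_add_natCast_sub_self u (show d < n by omega)]
  show List.IsChain _ _
  simp only [List.isChain_cons_cons, List.isChain_singleton, and_true]
  omega

lemma exists_mem_linkChords [NeZero n] (hcgh : IsCgh n H) {w x : ZMod n} (hwx : w ≠ x)
    (he : ({u, w, x} : Finset (ZMod n)) ∈ H) (hcons : ¬ (x = w + 1 ∨ w = x + 1)) :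
    ∃ p ∈ linkChords n H u, ({u + p.1, u + p.2} : Finset (ZMod n)) = {w, x} := by
  wlog hlt : (w - u).val < (x - u).val generalizing w x
  · have hval : (w - u).val ≠ (x - u).val := fun h =>
      hwx (sub_left_injective (ZMod.val_injective n h))
    obtain ⟨p, hp, hpe⟩ := this hwx.symm (by rwa [Finset.pair_comm]) (by tauto) (by omega)
    exact ⟨p, hp, hpe.trans (Finset.pair_comm x w)⟩
  set a := (w - u).val
  set b := (x - u).val
  have hw : u + (a : ZMod n) = w := by rw [ZMod.natCast_zmod_val, add_sub_cancel]
  have hx : u + (b : ZMod n) = x := by rw [ZMod.natCast_zmod_val, add_sub_cancel]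
  have ha : a ≠ 0 := by
    intro h0
    have hcard := hcgh _ he
    rw [← hw, h0, Nat.cast_zero, add_zero, Finset.insert_idem] at hcard
    exact absurd hcard (Finset.card_le_two.trans_lt (by norm_num)).ne
  have hb : b < n := ZMod.val_lt _
  have hgap : b ≠ a + 1 := by
    intro h
    apply hcons
    left
    rw [← hx, ← hw, h, Nat.cast_add, Nat.cast_one, add_assoc]
  refine ⟨(a, b), ?_, by rw [hw, hx]⟩
  simp only [linkChords, Finset.mem_filter, Finset.mem_product, Finset.mem_Icc, hw, hx]
  exact ⟨by omega, by omega, he⟩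

end linkChords

theorem S3_link_noncons (n : ℕ) (hn : 4 ≤ n)
    (H : Finset (Finset (ZMod n))) (hcgh : IsCgh n H) (hfree : ¬ HasS3 n H)
    (u : ZMod n) :
    {p : Finset (ZMod n) | ∃ w x : ZMod n, w ≠ x ∧ p = {w, x} ∧
        ({u, w, x} : Finset (ZMod n)) ∈ H ∧
        ¬ (x = w + 1 ∨ w = x + 1)}.ncard ≤ n - 3 := by
  have : NeZero n := ⟨by omega⟩
  set toEdge : ℕ × ℕ → Finset (ZMod n) := fun p => {u + p.1, u + p.2}
  calc
    _ ≤ (toEdge '' linkChords n H u).ncard := by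
      refine Set.ncard_le_ncard ?_ (Set.toFinite _)
      rintro _ ⟨w, x, hwx, rfl, he, hcons⟩
      exact exists_mem_linkChords hcgh hwx he hcons
    _ ≤ (linkChords n H u).card := by
      rw [← Set.ncard_coe_finset]
      exact Set.ncard_image_le (Finset.finite_toSet _)
    _ ≤ n - 1 - 2 :=
      (isNoncrossing_linkChords hfree).card_le fun _ hp => bounds_of_mem_linkChords hp
    _ = n - 3 := by omega
end
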